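/- arXiv:1302.1424 — 2 statements merged into one kernel-verified Lean document; each statement's English description precedes it below -/
import Mathlib

section
/- Let X be a complete, locally compact metric tree, let ν₋, ν₊ be antipodal probability measures on ∂X, and let μ be any Borel probability measure on the set of complete unit-speed geodesics of X with ends ν₋ and ν₊ (i.e. (e_{−∞})_#μ = ν₋ and (e_{+∞})_#μ = ν₊). Then for every oriented edge (xy) of X one has μ(xy) ≥ max(φ(xy), 0), where μ(xy) is the μ-measure of the set of geodesics traversing the edge from x to y and φ(xy) is the flow through (xy) defined by (ν₋,ν₊). -/
open MeasureTheory Metric Set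
open scoped ENNReal NNReal

noncomputable section

variable {X : Type*} [MetricSpace X]

/-- A metric space is *geodesic* if any two points are joined by an isometrically
parametrized path. -/
def IsGeodesicSpace (X : Type*) [MetricSpace X] : Prop :=
  ∀ x y : X, ∃ γ : ℝ → X, γ 0 = x ∧ γ (dist x y) = y ∧
    ∀ s ∈ Set.Icc (0 : ℝ) (dist x y), ∀ t ∈ Set.Icc (0 : ℝ) (dist x y),
      dist (γ s) (γ t) = |s - t|

/-- Zero-hyperbolicity (four point condition): the metric formulation of the fact
that all geodesic triangles are degenerate.  A complete geodesic zero-hyperbolic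
space is a metric tree. -/
def IsZeroHyperbolic (X : Type*) [MetricSpace X] : Prop :=
  ∀ x y z w : X, dist x y + dist z w ≤ max (dist x z + dist y w) (dist x w + dist y z)

/-- A unit-speed geodesic ray (only the behaviour for `t ≥ 0` matters). -/
def IsRay (γ : ℝ → X) : Prop :=
  ∀ s t : ℝ, 0 ≤ s → 0 ≤ t → dist (γ s) (γ t) = |s - t|

/-- The type of unit-speed geodesic rays of `X`. -/
def GeodesicRay (X : Type*) [MetricSpace X] : Type _ := {γ : ℝ → X // IsRay γ}

instance : TopologicalSpace (GeodesicRay X) :=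
  inferInstanceAs (TopologicalSpace {γ : ℝ → X // IsRay γ})

/-- Two rays are asymptotic when they stay at bounded distance from one another. -/
def Asymptotic (γ β : GeodesicRay X) : Prop :=
  ∃ C : ℝ, ∀ t : ℝ, 0 ≤ t → dist (γ.1 t) (β.1 t) ≤ C

/-- Asymptoty is an equivalence relation on rays. -/
def raySetoid (X : Type*) [MetricSpace X] : Setoid (GeodesicRay X) where
  r := Asymptotic
  iseqv := by
    refine ⟨fun γ => ⟨0, fun t _ => by simp⟩, ?_, ?_⟩
    · rintro γ β ⟨C, hC⟩
      exact ⟨C, fun t ht => by rw [dist_comm]; exact hC t ht⟩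
    · rintro γ β δ ⟨C₁, h₁⟩ ⟨C₂, h₂⟩
      exact ⟨C₁ + C₂, fun t ht => (dist_triangle _ _ _).trans (add_le_add (h₁ t ht) (h₂ t ht))⟩

/-- The geodesic boundary of `X`: asymptote classes of unit-speed geodesic rays. -/
def Boundary (X : Type*) [MetricSpace X] : Type _ := Quotient (raySetoid X)

/-- The class of a ray in the boundary. -/
def boundaryMk (γ : GeodesicRay X) : Boundary X := Quotient.mk (raySetoid X) γ

instance : TopologicalSpace (Boundary X) :=
  inferInstanceAs (TopologicalSpace (Quotient (raySetoid X)))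

instance : MeasurableSpace (Boundary X) := borel _

instance : BorelSpace (Boundary X) := ⟨rfl⟩

/-- The type of complete unit-speed geodesics (geodesic lines) of `X`. -/
def GeodesicLine (X : Type*) [MetricSpace X] : Type _ := {γ : ℝ → X // Isometry γ}

instance : TopologicalSpace (GeodesicLine X) :=
  inferInstanceAs (TopologicalSpace {γ : ℝ → X // Isometry γ})

instance : MeasurableSpace (GeodesicLine X) := borel _

instance : BorelSpace (GeodesicLine X) := ⟨rfl⟩

/-- Evaluation of a geodesic line at time `t`. -/
def eval (t : ℝ) (γ : GeodesicLine X) : X := γ.1 t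

/-- The positive-time ray of a geodesic line. -/
def posRay (γ : GeodesicLine X) : GeodesicRay X :=
  ⟨fun t => γ.1 t, fun s t _ _ => by rw [γ.2.dist_eq, Real.dist_eq]⟩

/-- The negative-time ray of a geodesic line. -/
def negRay (γ : GeodesicLine X) : GeodesicRay X :=
  ⟨fun t => γ.1 (-t), fun s t _ _ => by
    rw [γ.2.dist_eq, Real.dist_eq, neg_sub_neg, abs_sub_comm]⟩

/-- The end at `+∞` of a geodesic line (`e₊∞`). -/
def endTop (γ : GeodesicLine X) : Boundary X := boundaryMk (posRay γ)

/-- The end at `-∞` of a geodesic line (`e₋∞`). -/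
def endBot (γ : GeodesicLine X) : Boundary X := boundaryMk (negRay γ)


/-- `P` is a coupling of `μ` and `ν`. -/
def IsCoupling {Y Z : Type*} [MeasurableSpace Y] [MeasurableSpace Z]
    (μ : Measure Y) (ν : Measure Z) (P : Measure (Y × Z)) : Prop :=
  IsProbabilityMeasure P ∧ P.map Prod.fst = μ ∧ P.map Prod.snd = ν

/-- The support of a Borel measure: points all of whose open neighbourhoods have
positive measure. -/
def msupport {Y : Type*} [TopologicalSpace Y] [MeasurableSpace Y] (μ : Measure Y) : Set Y :=
  {y | ∀ U : Set Y, IsOpen U → y ∈ U → μ U ≠ 0}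

variable {X : Type*} [MetricSpace X] [MeasurableSpace X]

/-- Finite second moment with respect to the base point `x₀`. -/
def FiniteSecondMoment (x₀ : X) (μ : Measure X) : Prop :=
  ∫⁻ x, edist x x₀ ^ 2 ∂μ < ⊤

/-- The squared quadratic Wasserstein "distance" (possibly infinite) between two
measures on `X`. -/
def W2sq (μ ν : Measure X) : ℝ≥0∞ :=
  ⨅ (P : Measure (X × X)) (_ : IsCoupling μ ν P), ∫⁻ p, edist p.1 p.2 ^ 2 ∂P


/-- `AntipodalMeasures νneg νpos`: the two measures are concentrated on disjoint Borel
sets (the antipodality condition for measures on the boundary of a tree). -/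
def AntipodalMeasures {X : Type*} [MetricSpace X]
    (νneg νpos : MeasureTheory.Measure (Boundary X)) : Prop :=
  ∃ A B : Set (Boundary X), MeasurableSet A ∧ MeasurableSet B ∧ Disjoint A B ∧
    νneg Aᶜ = 0 ∧ νpos Bᶜ = 0

variable {X : Type*} [MetricSpace X]

/-- The squared "distance from `x₀` to the geodesic line with ends `ξ` and `ζ`"
`D₀(ξ,ζ)²` (the squared Gromov product), as an extended nonnegative real.  If no
such line exists — in a tree, exactly when `ξ = ζ` — the infimum over the empty
set gives the value `∞`, in accordance with the convention `D₀(ξ,ξ) = ∞`. -/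
def D0sq (x₀ : X) (ξ ζ : Boundary X) : ℝ≥0∞ :=
  ⨅ (γ : GeodesicLine X) (_ : endBot γ = ξ ∧ endTop γ = ζ),
    ENNReal.ofReal (Metric.infDist x₀ (Set.range γ.1)) ^ 2

/-- Minus the squared Gromov product, as a cost function with values in `[-∞, 0]`. -/
def negD0sq (x₀ : X) (ξ ζ : Boundary X) : EReal := -((D0sq x₀ ξ ζ : ℝ≥0∞) : EReal)

/-- A dynamical transport plan `μ` (a measure on geodesic lines) is a displacement
interpolation of a complete unit-speed geodesic of the Wasserstein space `W₂(X)`: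
all its time-`t` marginals lie in `W₂(X)` and they form a unit-speed geodesic. -/
def IsDisplacementGeodesic [MeasurableSpace X] (x₀ : X)
    (μ : MeasureTheory.Measure (GeodesicLine X)) : Prop :=
  MeasureTheory.IsProbabilityMeasure μ ∧
  (∀ t : ℝ, FiniteSecondMoment x₀ (μ.map (eval t))) ∧
  ∀ s t : ℝ, W2sq (μ.map (eval s)) (μ.map (eval t)) = ENNReal.ofReal ((s - t) ^ 2)

/-- Two complete geodesics are antagonist if one of them goes through two distinct
points `x, y` in this order while the other goes through them in the reverse order. -/
def Antagonist (γ β : GeodesicLine X) : Prop :=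
  ∃ x y : X, x ≠ y ∧ ∃ t u v w : ℝ, t < u ∧ v < w ∧
    γ.1 t = x ∧ γ.1 u = y ∧ β.1 v = y ∧ β.1 w = x

/-- `γ` traverses the edge from `x` to `y` (in this orientation). -/
def Traverses (γ : GeodesicLine X) (x y : X) : Prop :=
  ∃ t : ℝ, γ.1 t = x ∧ γ.1 (t + dist x y) = y

/-- The closest point of the geodesic line `γ` to `x₀` is `x`. -/
def ClosestAt (x₀ : X) (γ : GeodesicLine X) (x : X) : Prop :=
  (∃ t : ℝ, γ.1 t = x) ∧ ∀ t : ℝ, dist x₀ x ≤ dist x₀ (γ.1 t)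

/-- A set `S ⊆ Y × Y` is cyclically monotone for the cost `c`. -/
def CyclicallyMonotone {Y : Type*} (c : Y → Y → ℝ) (S : Set (Y × Y)) : Prop :=
  ∀ (n : ℕ) (p : Fin n → Y × Y), (∀ i, p i ∈ S) → ∀ σ : Equiv.Perm (Fin n),
    ∑ i, c (p i).1 (p i).2 ≤ ∑ i, c (p i).1 (p (σ i)).2

/-- Cyclical monotonicity for a cost with values in the extended reals. -/
def CyclicallyMonotoneE {Y : Type*} (c : Y → Y → EReal) (S : Set (Y × Y)) : Prop :=
  ∀ (n : ℕ) (p : Fin n → Y × Y), (∀ i, p i ∈ S) → ∀ σ : Equiv.Perm (Fin n),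
    ∑ i, c (p i).1 (p i).2 ≤ ∑ i, c (p i).1 (p (σ i)).2

/-- The connected components of the complement of a point (the "directions" at `x`:
edges of the tree emanating from `x`, when `x` is a vertex). -/
def complComponents (x : X) : Set (Set X) :=
  {C | ∃ y, y ≠ x ∧ C = connectedComponentIn ({x}ᶜ) y}

/-- `x` is a vertex of the tree `X`: the complement of `x` does not have exactly
two connected components (interior points of edges have exactly two). -/
def IsVertex (x : X) : Prop := (complComponents x).ncard ≠ 2

/-- `(x, y)` is an oriented edge: `x ≠ y` are vertices and no vertex lies strictly
between them. -/
def IsOrientedEdge (x y : X) : Prop :=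
  x ≠ y ∧ IsVertex x ∧ IsVertex y ∧
    ∀ z : X, dist x z + dist z y = dist x y → z = x ∨ z = y ∨ ¬ IsVertex z

/-- The set of boundary points lying in the direction of the set `C` as seen
from `x`: classes of rays starting at `x` that immediately enter `C`. -/
def dirBoundary (x : X) (C : Set X) : Set (Boundary X) :=
  {ξ | ∃ γ : GeodesicRay X, γ.1 0 = x ∧ boundaryMk γ = ξ ∧ ∀ t : ℝ, 0 < t → γ.1 t ∈ C}

/-- The *future* `(xy)₊` of the oriented edge `(x, y)`: boundary points `ξ` such
that the ray from `x` to `ξ` passes through `y`, i.e. the boundary points of the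
component of the complement of the open edge containing `y`. -/
def future (x y : X) : Set (Boundary X) :=
  {ξ | ∃ γ : GeodesicRay X, γ.1 0 = x ∧ boundaryMk γ = ξ ∧ γ.1 (dist x y) = y}

/-- The value of the signed measure `ν = νpos - νneg` on a set of boundary points. -/
def signedFlow (νneg νpos : MeasureTheory.Measure (Boundary X)) (A : Set (Boundary X)) : ℝ :=
  (νpos A).toReal - (νneg A).toReal

/-- The flow `φ(xy) = ν((xy)₊)` through the oriented edge `(x, y)`. -/
def edgeFlow (νneg νpos : MeasureTheory.Measure (Boundary X)) (x y : X) : ℝ :=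
  signedFlow νneg νpos (future x y)

/-- The flow `φ(x)` through the point `x`: the sum, over the directions at `x`
carrying a positive flow, of these flows (outflow = inflow). -/
def vertexFlow (νneg νpos : MeasureTheory.Measure (Boundary X)) (x : X) : ℝ :=
  ∑' C : complComponents x, max (signedFlow νneg νpos (dirBoundary x C.1)) 0

/-- The flow at `x` in the direction of the base point `x₀` (the flow through the
edge at `x` along which the distance to `x₀` decreases), signed as going out of `x`. -/
def towardFlow (νneg νpos : MeasureTheory.Measure (Boundary X)) (x₀ x : X) : ℝ :=
  signedFlow νneg νpos (dirBoundary x (connectedComponentIn ({x}ᶜ) x₀))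

open Classical in
/-- The specific flow `φ⁰(x)`: for `x ≠ x₀`, the flow `φ(x)` minus the contribution
of the edge at `x` pointing toward `x₀` when that edge is positive (where it is
removed from the sum of outgoing positive flows) or negative (where it is removed
from the equal sum of incoming flows) — in both cases its absolute value is
subtracted — and `φ⁰(x₀) = φ(x₀)`. -/
def specificFlow (νneg νpos : MeasureTheory.Measure (Boundary X)) (x₀ x : X) : ℝ :=
  if x = x₀ then vertexFlow νneg νpos x
  else vertexFlow νneg νpos x - |towardFlow νneg νpos x₀ x|


end

section AuxTree

variable {X : Type*} [MetricSpace X]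

/-- Gromov product inequality (at basepoint `p`) from the four point condition. -/
lemma tree_gromov (htree : IsZeroHyperbolic X) (p a b c : X) :
    min (dist p a + dist p c - dist a c) (dist p b + dist p c - dist b c)
      ≤ dist p a + dist p b - dist a b := by
  have h := htree a b c p
  have h1 : dist c p = dist p c := dist_comm c p
  have h2 : dist b p = dist p b := dist_comm b p
  have h3 : dist a p = dist p a := dist_comm a p
  rcases le_max_iff.1 h with h' | h'
  · exact min_le_of_left_le (by linarith)
  · exact min_le_of_right_le (by linarith)

/-- Two asymptotic rays with the same origin coincide (for nonnegative times). -/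
lemma tree_rayEq (htree : IsZeroHyperbolic X) {β ρ : ℝ → X}
    (hβ : IsRay β) (hρ : IsRay ρ) (h0 : β 0 = ρ 0) {C : ℝ}
    (hC : ∀ t, 0 ≤ t → dist (β t) (ρ t) ≤ C) :
    ∀ t, 0 ≤ t → β t = ρ t := by
  intro t ht
  set T := t + max C 0 + 1 with hT
  have hp : β 0 = ρ 0 := h0
  have hCnn : 0 ≤ max C 0 := le_max_right _ _
  have hT0 : 0 ≤ T := by positivity
  have hTt : t ≤ T := by nlinarith [le_max_left C 0]
  have dpβt : dist (β 0) (β t) = t := by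
    rw [hβ 0 t le_rfl ht]; rw [abs_of_nonpos (by linarith)]; ring
  have dpρt : dist (β 0) (ρ t) = t := by
    rw [hp, hρ 0 t le_rfl ht, abs_of_nonpos (by linarith)]; ring
  have dpβT : dist (β 0) (β T) = T := by
    rw [hβ 0 T le_rfl hT0, abs_of_nonpos (by linarith)]; ring
  have dpρT : dist (β 0) (ρ T) = T := by
    rw [hp, hρ 0 T le_rfl hT0, abs_of_nonpos (by linarith)]; ring
  have dββ : dist (β t) (β T) = T - t := by
    rw [hβ t T ht hT0, abs_of_nonpos (by linarith)]; ring
  have dρρ : dist (ρ t) (ρ T) = T - t := by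
    rw [hρ t T ht hT0, abs_of_nonpos (by linarith)]; ring
  have dβρT : dist (β T) (ρ T) ≤ C := hC T hT0
  have hCC : C ≤ max C 0 := le_max_left _ _
  -- first application: bound dist (β T) (ρ t)
  have g2 := tree_gromov htree (β 0) (β T) (ρ t) (ρ T)
  have hA : dist (β T) (ρ t) ≤ T - t := by
    rcases min_le_iff.1 g2 with h' | h' <;> nlinarith
  -- second application
  have g1 := tree_gromov htree (β 0) (β t) (ρ t) (β T)
  have : dist (β t) (ρ t) ≤ 0 := by
    have hc1 : dist (β t) (β T) = T - t := dββ
    have hc2 : dist (ρ t) (β T) = dist (β T) (ρ t) := dist_comm _ _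
    rcases min_le_iff.1 g1 with h' | h' <;> nlinarith
  exact dist_le_zero.1 this

/-- Projection of a point onto a geodesic ray: the distance function is
`P + |t - s*|`. -/
lemma tree_proj_ray (htree : IsZeroHyperbolic X) {η : ℝ → X}
    (hη : ∀ s t, 0 ≤ s → 0 ≤ t → dist (η s) (η t) = |s - t|) (p : X) :
    ∃ s : ℝ, 0 ≤ s ∧ ∀ t, 0 ≤ t → dist p (η t) = dist p (η s) + |t - s| := by
  set f : ℝ → X := η with hf
  have hlip : ∀ a b, 0 ≤ a → 0 ≤ b → |dist p (η a) - dist p (η b)| ≤ |a - b| := by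
    intro a b ha hb
    calc |dist p (η a) - dist p (η b)| = |dist (η a) p - dist (η b) p| := by
          rw [dist_comm (η a) p, dist_comm (η b) p]
    _ ≤ dist (η a) (η b) := abs_dist_sub_le _ _ _
    _ = |a - b| := hη a b ha hb
  -- min on a compact interval
  set M := 2 * dist p (η 0) + 1 with hM
  have hM0 : 0 ≤ M := by positivity
  have hcont : ContinuousOn (fun t => dist p (η t)) (Set.Icc 0 M) := by
    have : LipschitzOnWith 1 (fun t => dist p (η t)) (Set.Icc 0 M) := by
      rw [lipschitzOnWith_iff_dist_le_mul]
      intro a ha b hb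
      rw [Real.dist_eq, Real.dist_eq]
      simpa using hlip a b ha.1 hb.1
    exact this.continuousOn
  obtain ⟨s, hsmem, hsmin⟩ := isCompact_Icc.exists_isMinOn ⟨0, by
    constructor <;> [exact le_rfl; exact hM0]⟩ hcont
  have hs0 : 0 ≤ s := hsmem.1
  have hminIcc : ∀ t ∈ Set.Icc (0:ℝ) M, dist p (η s) ≤ dist p (η t) := fun t ht => hsmin ht
  have hmin : ∀ t, 0 ≤ t → dist p (η s) ≤ dist p (η t) := by
    intro t ht
    rcases le_or_gt t M with h | h
    · exact hminIcc t ⟨ht, h⟩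
    · have h1 : dist (η 0) (η t) ≤ dist (η 0) p + dist p (η t) := dist_triangle _ _ _
      have h2 : dist (η 0) (η t) = t := by
        rw [hη 0 t le_rfl ht, abs_of_nonpos (by linarith)]; ring
      have h3 : dist (η 0) p = dist p (η 0) := dist_comm _ _
      have h4 : dist p (η s) ≤ dist p (η 0) := hminIcc 0 ⟨le_rfl, hM0⟩
      linarith
  refine ⟨s, hs0, ?_⟩
  -- dichotomy from the four-point condition
  have hdich : ∀ a b c, 0 ≤ a → a < b → b < c →
      dist p (η b) + (c - a) ≤ max (dist p (η a) + (c - b)) (dist p (η c) + (b - a)) := by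
    intro a b c ha hab hbc
    have h := htree p (η b) (η a) (η c)
    have hb0 : 0 ≤ b := by linarith
    have hc0 : 0 ≤ c := by linarith
    have e1 : dist (η a) (η c) = c - a := by
      rw [hη a c ha hc0, abs_of_nonpos (by linarith)]; ring
    have e2 : dist (η b) (η c) = c - b := by
      rw [hη b c hb0 hc0, abs_of_nonpos (by linarith)]; ring
    have e3 : dist (η b) (η a) = b - a := by
      rw [hη b a hb0 ha, abs_of_nonneg (by linarith)]
    rw [e1, e2, e3] at h
    exact h
  -- one sided growth: t ≥ s
  have hright : ∀ t, s ≤ t → dist p (η t) = dist p (η s) + (t - s) := by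
    intro t hst
    rcases eq_or_lt_of_le hst with rfl | hlt
    · simp
    have hub : dist p (η t) ≤ dist p (η s) + (t - s) := by
      have := hlip t s (by linarith) hs0
      have h2 := abs_le.1 this
      have h3 : |t - s| = t - s := abs_of_nonneg (by linarith)
      rw [h3] at h2
      cases' abs_le.1 this with l r
      linarith [le_abs_self (dist p (η t) - dist p (η s)), abs_le.1 this]
    have hlb : dist p (η s) + (t - s) ≤ dist p (η t) := by
      have key : ∀ ε, 0 < ε → dist p (η s) + (t - s) ≤ dist p (η t) + 2 * ε := by
        intro ε hε
        rcases le_or_gt (t - s) ε with h | h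
        · nlinarith [hmin t (by linarith)]
        · have hb : s < s + ε := by linarith
          have hbc : s + ε < t := by linarith
          have hd := hdich s (s + ε) t hs0 hb hbc
          rcases le_max_iff.1 hd with h' | h'
          · nlinarith [hmin (s + ε) (by linarith)]
          · nlinarith [hmin (s + ε) (by linarith), hlip (s+ε) s (by linarith) hs0,
              abs_le.1 (hlip (s+ε) s (by linarith) hs0), abs_of_nonneg (le_of_lt hε)]
      by_contra hcon
      push_neg at hcon
      obtain ⟨ε, hε, hlt'⟩ : ∃ ε, 0 < ε ∧ dist p (η t) + 2 * ε < dist p (η s) + (t - s) :=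
        ⟨(dist p (η s) + (t - s) - dist p (η t)) / 4, by linarith, by linarith⟩
      exact absurd (key ε hε) (not_le.2 hlt')
    linarith
  -- one sided growth: t ≤ s
  have hleft : ∀ t, 0 ≤ t → t ≤ s → dist p (η t) = dist p (η s) + (s - t) := by
    intro t ht hts
    rcases eq_or_lt_of_le hts with rfl | hlt
    · simp
    have hub : dist p (η t) ≤ dist p (η s) + (s - t) := by
      have := abs_le.1 (hlip t s ht hs0)
      have h3 : |t - s| = s - t := by rw [abs_of_nonpos (by linarith)]; ring
      rw [h3] at this
      linarith [this.1, this.2]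
    have hlb : dist p (η s) + (s - t) ≤ dist p (η t) := by
      have key : ∀ ε, 0 < ε → dist p (η s) + (s - t) ≤ dist p (η t) + 2 * ε := by
        intro ε hε
        rcases le_or_gt (s - t) ε with h | h
        · nlinarith [hmin t ht]
        · have hb : t < s - ε := by linarith
          have hbc : s - ε < s := by linarith
          have hd := hdich t (s - ε) s ht hb hbc
          rcases le_max_iff.1 hd with h' | h'
          · nlinarith [hmin (s - ε) (by linarith)]
          · nlinarith [hmin (s - ε) (by linarith)]
      by_contra hcon
      push_neg at hcon
      obtain ⟨ε, hε, hlt'⟩ : ∃ ε, 0 < ε ∧ dist p (η t) + 2 * ε < dist p (η s) + (s - t) :=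
        ⟨(dist p (η s) + (s - t) - dist p (η t)) / 4, by linarith, by linarith⟩
      exact absurd (key ε hε) (not_le.2 hlt')
    linarith
  intro t ht
  rcases le_or_gt s t with h | h
  · rw [hright t h, abs_of_nonneg (by linarith)]
  · rw [hleft t ht (le_of_lt h), abs_of_nonpos (by linarith)]; ring

end AuxTree

section AuxTree2

variable {X : Type*} [MetricSpace X]

/-- A point between two points of a geodesic ray lies on the ray. -/
lemma tree_between (htree : IsZeroHyperbolic X) {ρ : ℝ → X} (hρ : IsRay ρ) {z : X} {b : ℝ}
    (hb : 0 ≤ b) (h : dist (ρ 0) z + dist z (ρ b) = b) : z = ρ (dist (ρ 0) z) := by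
  set r := dist (ρ 0) z with hr
  have hr0 : 0 ≤ r := dist_nonneg
  have hrb : r ≤ b := by have := dist_nonneg (x := z) (y := ρ b); linarith
  have d1 : dist (ρ 0) (ρ r) = r := by
    rw [hρ 0 r le_rfl hr0, abs_of_nonpos (by linarith)]; ring
  have d2 : dist (ρ r) (ρ b) = b - r := by
    rw [hρ r b hr0 (by linarith), abs_of_nonpos (by linarith)]; ring
  have h4 := htree z (ρ r) (ρ 0) (ρ b)
  have d3 : dist (ρ 0) (ρ b) = b := by
    rw [hρ 0 b le_rfl hb, abs_of_nonpos (by linarith)]; ring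
  have d4 : dist z (ρ 0) = r := (dist_comm z (ρ 0)).trans hr.symm
  have hzb : dist z (ρ b) = b - r := by linarith
  have d1' : dist (ρ r) (ρ 0) = r := by rw [dist_comm]; exact d1
  have : dist z (ρ r) ≤ 0 := by
    rcases le_max_iff.1 h4 with h' | h' <;> nlinarith
  exact dist_le_zero.1 this

/-- Concatenation of a geodesic segment `σ` from `p` to the origin of a geodesic
ray `η`, when `p` projects on `η` at the origin: gives a ray from `p`. -/
lemma tree_cons {η σ : ℝ → X} {p : X} {P : ℝ} (hP : 0 ≤ P)
    (hη : ∀ s t, 0 ≤ s → 0 ≤ t → dist (η s) (η t) = |s - t|)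
    (hσ0 : σ 0 = p) (hσP : σ P = η 0)
    (hσ : ∀ a b, a ∈ Set.Icc 0 P → b ∈ Set.Icc 0 P → dist (σ a) (σ b) = |a - b|)
    (hproj : ∀ u, 0 ≤ u → dist p (η u) = P + u) :
    ∃ ρ : ℝ → X, IsRay ρ ∧ ρ 0 = p ∧ (∀ a, 0 ≤ a → a ≤ P → ρ a = σ a) ∧
      (∀ u, 0 ≤ u → ρ (P + u) = η u) ∧
      (∀ a, 0 ≤ a → a ≤ P → ∀ u, 0 ≤ u → dist (ρ a) (η u) = (P - a) + u) := by
  have c1 : ∀ a, 0 ≤ a → a ≤ P → ∀ u, 0 ≤ u → dist (σ a) (η u) = (P - a) + u := by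
    intro a ha haP u hu
    have hub : dist (σ a) (η u) ≤ (P - a) + u := by
      calc dist (σ a) (η u) ≤ dist (σ a) (σ P) + dist (σ P) (η u) := dist_triangle _ _ _
      _ = (P - a) + u := by
          rw [hσ a P ⟨ha, haP⟩ ⟨hP, le_rfl⟩, hσP, hη 0 u le_rfl hu,
            abs_of_nonpos (by linarith), abs_of_nonpos (by linarith)]; ring
    have hlb : (P - a) + u ≤ dist (σ a) (η u) := by
      have h1 : dist p (η u) ≤ dist p (σ a) + dist (σ a) (η u) := dist_triangle _ _ _
      have h2 : dist p (σ a) = a := by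
        rw [← hσ0, hσ 0 a ⟨le_rfl, hP⟩ ⟨ha, haP⟩, abs_of_nonpos (by linarith)]; ring
      have h3 := hproj u hu
      linarith
    linarith
  classical
  refine ⟨fun v => if v < P then σ v else η (v - P), ?_, ?_, ?_, ?_, ?_⟩
  rotate_left
  · show (if (0:ℝ) < P then σ 0 else η (0 - P)) = p
    by_cases h : (0:ℝ) < P
    · simp only [if_pos h]; exact hσ0
    · have hP0 : P = 0 := le_antisymm (not_lt.1 h) hP
      have h0 : η 0 = p := by rw [← hσP, hP0, hσ0]
      rw [if_neg h, show (0:ℝ) - P = 0 by rw [hP0]; ring, h0]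
  · intro a ha haP
    show (if a < P then σ a else η (a - P)) = σ a
    by_cases h : a < P
    · rw [if_pos h]
    · have : a = P := le_antisymm haP (not_lt.1 h)
      rw [if_neg h, this, sub_self, hσP]
  · intro u hu
    show (if P + u < P then σ (P + u) else η (P + u - P)) = η u
    rw [if_neg (by intro hc; linarith), show P + u - P = u by ring]
  · intro a ha haP u hu
    show dist (if a < P then σ a else η (a - P)) (η u) = (P - a) + u
    by_cases h : a < P
    · rw [if_pos h]; exact c1 a ha haP u hu
    · have haP' : a = P := le_antisymm haP (not_lt.1 h)
      rw [if_neg h, haP', sub_self, hη 0 u le_rfl hu, abs_of_nonpos (by linarith)]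
      ring
  · -- IsRay
    have key : ∀ s t, 0 ≤ s → 0 ≤ t → s ≤ t →
        dist (if s < P then σ s else η (s - P)) (if t < P then σ t else η (t - P)) = t - s := by
      intro s t hs ht hst
      by_cases h2 : t < P
      · rw [if_pos (lt_of_le_of_lt hst h2), if_pos h2,
          hσ s t ⟨hs, by linarith⟩ ⟨ht, by linarith⟩, abs_of_nonpos (by linarith)]; ring
      · rw [if_neg h2]
        by_cases h1 : s < P
        · rw [if_pos h1]
          rw [c1 s hs (by linarith) (t - P) (by simp at h2; linarith)]; ring
        · rw [if_neg h1]
          simp only [not_lt] at h1 h2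
          rw [hη (s - P) (t - P) (by linarith) (by linarith), abs_of_nonpos (by linarith)]
          ring
    intro s t hs ht
    show dist (if s < P then σ s else η (s - P)) (if t < P then σ t else η (t - P)) = |s - t|
    rcases le_total s t with h | h
    · rw [key s t hs ht h, abs_of_nonpos (by linarith)]; ring
    · rw [dist_comm, key t s ht hs h, abs_of_nonneg (by linarith)]

/-- Projection of a point onto a complete geodesic line. -/
lemma tree_proj_line (htree : IsZeroHyperbolic X) {g : ℝ → X}
    (hg : ∀ s t, dist (g s) (g t) = |s - t|) (p : X) :
    ∃ c : ℝ, ∀ t, dist p (g t) = dist p (g c) + |t - c| := by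
  obtain ⟨s₁, hs₁0, h₁⟩ := tree_proj_ray htree (fun s t _ _ => hg s t) p
  obtain ⟨s₂, hs₂0, h₂⟩ := tree_proj_ray htree (η := fun u => g (-u))
    (fun s t _ _ => by rw [hg (-s) (-t)]; rw [show -s - -t = -(s - t) by ring, abs_neg]) p
  have e0 : dist p (g 0) = dist p (g s₁) + s₁ := by
    have := h₁ 0 le_rfl
    rwa [abs_of_nonpos (by linarith), neg_sub, sub_zero] at this
  have e0' : dist p (g 0) = dist p (g (-s₂)) + s₂ := by
    have := h₂ 0 le_rfl
    rw [neg_zero] at this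
    rwa [abs_of_nonpos (by linarith), neg_sub, sub_zero] at this
  -- at most one of s₁, s₂ is positive
  have hzero : s₂ = 0 ∨ s₁ = 0 := by
    have h4 := htree p (g 0) (g (-s₂)) (g s₁)
    have d1 : dist (g (-s₂)) (g s₁) = s₂ + s₁ := by
      rw [hg, abs_of_nonpos (by linarith)]; ring
    have d2 : dist (g 0) (g s₁) = s₁ := by rw [hg, abs_of_nonpos (by linarith)]; ring
    have d3 : dist (g 0) (g (-s₂)) = s₂ := by rw [hg, abs_of_nonneg (by linarith)]; ring
    rcases le_max_iff.1 h4 with h' | h'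
    · left; linarith
    · right; linarith
  rcases hzero with h0 | h0
  · refine ⟨s₁, fun t => ?_⟩
    rcases le_or_gt 0 t with ht | ht
    · exact h₁ t ht
    · have := h₂ (-t) (by linarith)
      rw [neg_neg, h0, neg_zero, sub_zero, abs_of_nonneg (by linarith)] at this
      rw [this, abs_of_nonpos (by linarith)]
      linarith [e0]
  · refine ⟨-s₂, fun t => ?_⟩
    rcases le_or_gt t 0 with ht | ht
    · have := h₂ (-t) (by linarith)
      rw [neg_neg] at this
      rw [this]
      congr 1
      rw [show -t - s₂ = -(t - -s₂) by ring, abs_neg]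
    · have := h₁ t (by linarith)
      rw [h0, sub_zero, abs_of_nonneg (by linarith)] at this
      rw [h0] at e0
      rw [this, abs_of_nonneg (by linarith)]
      have h5 : dist p (g 0) = dist p (g s₁) + s₁ := by rw [h0]; simp
      rw [show g 0 = g s₁ by rw [h0]] at e0'
      linarith

lemma tree_rel_trans (htree : IsZeroHyperbolic X) {z a b c : X}
    (hab : 0 < dist a z + dist b z - dist a b) (hbc : 0 < dist b z + dist c z - dist b c) :
    0 < dist a z + dist c z - dist a c := by
  have h := tree_gromov htree z a c b
  have c1 : dist z a = dist a z := dist_comm _ _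
  have c2 : dist z b = dist b z := dist_comm _ _
  have c3 : dist z c = dist c z := dist_comm _ _
  have c4 : dist c b = dist b c := dist_comm _ _
  rcases min_le_iff.1 h with h' | h' <;> linarith

lemma tree_comp_rel (htree : IsZeroHyperbolic X) {z w₁ w₂ : X} (h1 : w₁ ≠ z) (h2 : w₂ ≠ z)
    (hc : connectedComponentIn ({z}ᶜ) w₁ = connectedComponentIn ({z}ᶜ) w₂) :
    0 < dist w₁ z + dist w₂ z - dist w₁ w₂ := by
  set K := connectedComponentIn ({z}ᶜ) w₁ with hK
  have hm1 : w₁ ∈ K := mem_connectedComponentIn (by simpa using h1)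
  have hm2 : w₂ ∈ K := by
    rw [hc]; exact mem_connectedComponentIn (by simpa using h2)
  have hKsub : K ⊆ ({z}ᶜ : Set X) := connectedComponentIn_subset _ _
  have hKconn : IsPreconnected K := isPreconnected_connectedComponentIn
  set U : Set X := {w | 0 < dist w z + dist w₁ z - dist w w₁} with hU
  set V : Set X := {w | 0 < dist w z ∧ dist w z + dist w₁ z - dist w w₁ ≤ 0} with hV
  have hUopen : IsOpen U := by
    apply isOpen_lt continuous_const
    exact ((continuous_id.dist continuous_const).add continuous_const).sub
      (continuous_id.dist continuous_const)
  have hVopen : IsOpen V := by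
    rw [Metric.isOpen_iff]
    intro w' hw'
    refine ⟨dist w' z, hw'.1, fun w'' hw'' => ?_⟩
    rw [Metric.mem_ball] at hw''
    have ha : 0 < dist w'' z := by
      have h5 := dist_triangle w' w'' z
      have hcm : dist w' w'' = dist w'' w' := dist_comm _ _
      linarith
    refine ⟨ha, ?_⟩
    by_contra hcon
    push_neg at hcon
    have hrel : 0 < dist w' z + dist w'' z - dist w' w'' := by
      have hcm : dist w' w'' = dist w'' w' := dist_comm _ _
      linarith
    have := tree_rel_trans htree hrel hcon
    exact absurd this (not_lt.2 hw'.2)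
  have hcover : K ⊆ U ∪ V := by
    intro w hw
    have hwz : w ≠ z := hKsub hw
    rcases lt_or_ge 0 (dist w z + dist w₁ z - dist w w₁) with h | h
    · exact Or.inl h
    · exact Or.inr ⟨dist_pos.2 hwz, h⟩
  have hw₁U : w₁ ∈ U := by
    have : (0:ℝ) < dist w₁ z := dist_pos.2 h1
    simp only [hU, Set.mem_setOf_eq, dist_self]
    linarith
  by_cases hw₂ : w₂ ∈ U
  · have : 0 < dist w₂ z + dist w₁ z - dist w₂ w₁ := hw₂
    have hcomm : dist w₂ w₁ = dist w₁ w₂ := dist_comm _ _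
    linarith
  · have hw₂V : w₂ ∈ V := by
      rcases hcover hm2 with h | h
      · exact absurd h hw₂
      · exact h
    obtain ⟨w, _, hwU, hwV⟩ := hKconn U V hUopen hVopen hcover ⟨w₁, hm1, hw₁U⟩ ⟨w₂, hm2, hw₂V⟩
    exact absurd hwU (not_lt.2 hwV.2)

lemma tree_three_dirs (htree : IsZeroHyperbolic X) {z w₁ w₂ w₃ : X}
    (h1 : w₁ ≠ z) (h2 : w₂ ≠ z) (h3 : w₃ ≠ z)
    (h12 : dist w₁ z + dist w₂ z - dist w₁ w₂ ≤ 0)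
    (h13 : dist w₁ z + dist w₃ z - dist w₁ w₃ ≤ 0)
    (h23 : dist w₂ z + dist w₃ z - dist w₂ w₃ ≤ 0) : IsVertex z := by
  intro hn
  set C₁ := connectedComponentIn ({z}ᶜ) w₁
  set C₂ := connectedComponentIn ({z}ᶜ) w₂
  set C₃ := connectedComponentIn ({z}ᶜ) w₃
  have d12 : C₁ ≠ C₂ := fun h => absurd (tree_comp_rel htree h1 h2 h) (not_lt.2 h12)
  have d13 : C₁ ≠ C₃ := fun h => absurd (tree_comp_rel htree h1 h3 h) (not_lt.2 h13)
  have d23 : C₂ ≠ C₃ := fun h => absurd (tree_comp_rel htree h2 h3 h) (not_lt.2 h23)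
  have hfin : (complComponents z).Finite :=
    Set.finite_of_ncard_ne_zero (by rw [hn]; norm_num)
  have hsub : ({C₁, C₂, C₃} : Set (Set X)) ⊆ complComponents z := by
    rintro C (rfl | rfl | rfl)
    · exact ⟨w₁, h1, rfl⟩
    · exact ⟨w₂, h2, rfl⟩
    · exact ⟨w₃, h3, rfl⟩
  have h3card : ({C₁, C₂, C₃} : Set (Set X)).ncard = 3 :=
    Set.ncard_eq_three.2 ⟨C₁, C₂, C₃, d12, d13, d23, rfl⟩
  have := Set.ncard_le_ncard hsub hfin
  rw [h3card, hn] at this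
  norm_num at this

/-- From any point `x` there is a ray asymptotic to a given ray `b`, obtained by
joining `x` to its projection on `b` and following `b` afterwards. -/
lemma tree_x_ray (htree : IsZeroHyperbolic X) (hgeo : IsGeodesicSpace X) (x : X) {b : ℝ → X}
    (hb : ∀ s t, 0 ≤ s → 0 ≤ t → dist (b s) (b t) = |s - t|) :
    ∃ (ρ : ℝ → X) (P s₀ : ℝ), IsRay ρ ∧ ρ 0 = x ∧ 0 ≤ P ∧ 0 ≤ s₀ ∧
      (∀ t, 0 ≤ t → dist x (b t) = P + |t - s₀|) ∧
      (∀ u, 0 ≤ u → ρ (P + u) = b (s₀ + u)) ∧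
      (∀ a, 0 ≤ a → a ≤ P → ∀ u, 0 ≤ u → dist (ρ a) (b (s₀ + u)) = (P - a) + u) ∧
      (∃ C, ∀ t, 0 ≤ t → dist (ρ t) (b t) ≤ C) := by
  obtain ⟨s₀, hs₀, hks⟩ := tree_proj_ray htree hb x
  set P := dist x (b s₀) with hPdef
  have hP0 : 0 ≤ P := dist_nonneg
  set η : ℝ → X := fun u => b (s₀ + u) with hηdef
  have hη : ∀ u v, 0 ≤ u → 0 ≤ v → dist (η u) (η v) = |u - v| := by
    intro u v hu hv
    rw [hηdef]
    simp only
    rw [hb (s₀ + u) (s₀ + v) (by linarith) (by linarith)]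
    congr 1; ring
  have hproj : ∀ u, 0 ≤ u → dist x (η u) = P + u := by
    intro u hu
    rw [hηdef]
    simp only
    rw [hks (s₀ + u) (by linarith), show s₀ + u - s₀ = u by ring, abs_of_nonneg hu]
  obtain ⟨σ, hσ0, hσd, hσiso⟩ := hgeo x (b s₀)
  have hσP : σ P = η 0 := by
    rw [hηdef]; simp only [add_zero]; exact hσd
  have hσiso' : ∀ a c, a ∈ Set.Icc (0:ℝ) P → c ∈ Set.Icc (0:ℝ) P →
      dist (σ a) (σ c) = |a - c| := fun a c ha hc => hσiso a ha c hc
  obtain ⟨ρ, hρray, hρ0, hρσ, hρη, hρc1⟩ := tree_cons hP0 hη hσ0 hσP hσiso' hproj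
  refine ⟨ρ, P, s₀, hρray, hρ0, hP0, hs₀, fun t ht => hks t ht, hρη, hρc1, ?_⟩
  refine ⟨3 * P + s₀ + |s₀ - P|, fun t ht => ?_⟩
  rcases le_or_gt t P with h | h
  · have h1 : ρ t = σ t := hρσ t ht h
    have h2 : dist (σ t) x = t := by
      rw [← hσ0, hσiso' t 0 ⟨ht, h⟩ ⟨le_rfl, hP0⟩, sub_zero, abs_of_nonneg ht]
    have h3 : dist x (b t) = P + |t - s₀| := hks t ht
    have h4 : |t - s₀| ≤ s₀ + P := by
      rw [abs_le]; constructor <;> linarith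
    calc dist (ρ t) (b t) ≤ dist (ρ t) x + dist x (b t) := dist_triangle _ _ _
    _ ≤ t + (P + (s₀ + P)) := by rw [h1, h2]; linarith
    _ ≤ 3 * P + s₀ + |s₀ - P| := by
          have := abs_nonneg (s₀ - P)
          linarith
  · have h1 : ρ t = η (t - P) := by
      have := hρη (t - P) (by linarith)
      rwa [show P + (t - P) = t by ring] at this
    have h2 : dist (η (t - P)) (b t) = |s₀ - P| := by
      rw [hηdef]; simp only
      rw [hb (s₀ + (t - P)) t (by linarith) ht]
      congr 1; ring
    rw [h1, h2]
    have : (0:ℝ) ≤ 3 * P + s₀ := by positivity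
    linarith

/-- Membership criterion for the future of the oriented edge `(x, y)`. -/
lemma tree_char (htree : IsZeroHyperbolic X) (hgeo : IsGeodesicSpace X) (x y : X)
    (β : GeodesicRay X) :
    boundaryMk β ∈ future x y ↔
      dist x (β.1 (dist x (β.1 0) + dist x y)) =
        dist x y + dist y (β.1 (dist x (β.1 0) + dist x y)) := by
  set d := dist x y with hd
  have hd0 : 0 ≤ d := dist_nonneg
  obtain ⟨ρ, P, s₀, hρray, hρ0, hP0, hs₀0, hks, hρη, hρc1, ⟨C, hC⟩⟩ :=
    tree_x_ray htree hgeo x β.2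
  set R := dist x (β.1 0) with hR
  have hRval : R = P + s₀ := by
    rw [hR, hks 0 le_rfl, abs_of_nonpos (by linarith)]; ring
  set t₀ := R + d with ht₀
  have ht₀0 : 0 ≤ t₀ := by rw [ht₀]; positivity
  have hs₀t₀ : s₀ ≤ t₀ := by
    rw [ht₀, hRval]; linarith
  have hxt₀ : dist x (β.1 t₀) = P + (t₀ - s₀) := by
    rw [hks t₀ ht₀0, abs_of_nonneg (by linarith)]
  constructor
  · rintro ⟨δ, hδ0, hδmk, hδd⟩
    have hδβ : Asymptotic δ β := Quotient.exact hδmk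
    obtain ⟨C₁, hC₁⟩ := hδβ
    have heq : ∀ t, 0 ≤ t → δ.1 t = ρ t := by
      refine tree_rayEq htree δ.2 hρray (by rw [hδ0, hρ0]) (C := C₁ + C) ?_
      intro t ht
      calc dist (δ.1 t) (ρ t) ≤ dist (δ.1 t) (β.1 t) + dist (β.1 t) (ρ t) := dist_triangle _ _ _
      _ ≤ C₁ + C := add_le_add (hC₁ t ht) (by rw [dist_comm]; exact hC t ht)
    have hyρ : y = ρ d := by rw [← hδd, heq d hd0]
    rcases le_or_gt d P with h | h
    · have h1 := hρc1 d hd0 h (t₀ - s₀) (by linarith)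
      rw [show s₀ + (t₀ - s₀) = t₀ by ring] at h1
      rw [← hyρ] at h1
      rw [hxt₀, h1]; ring
    · have h2 : y = β.1 (s₀ + (d - P)) := by
        rw [hyρ, ← hρη (d - P) (by linarith), show P + (d - P) = d by ring]
      have h3 : dist y (β.1 t₀) = t₀ - s₀ - d + P := by
        rw [h2, β.2 (s₀ + (d - P)) t₀ (by linarith) ht₀0]
        rw [abs_of_nonpos (by rw [ht₀, hRval]; linarith)]
        ring
      rw [hxt₀, h3]; ring
  · intro hE
    obtain ⟨u₀, hu₀0, hky⟩ := tree_proj_ray htree β.2 y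
    set Q := dist y (β.1 u₀) with hQ
    have hQ0 : 0 ≤ Q := dist_nonneg
    have hu₀t₀ : u₀ ≤ t₀ := by
      have h1 := hky 0 le_rfl
      rw [abs_of_nonpos (by linarith)] at h1
      have h2 : dist y (β.1 0) ≤ d + R := by
        rw [hd, hR]
        calc dist y (β.1 0) ≤ dist y x + dist x (β.1 0) := dist_triangle _ _ _
        _ = dist x y + dist x (β.1 0) := by rw [dist_comm]
      rw [ht₀]; linarith
    have hyt₀ : dist y (β.1 t₀) = Q + (t₀ - u₀) := by
      rw [hky t₀ ht₀0, abs_of_nonneg (by linarith)]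
    have hEE : P - s₀ = d + Q - u₀ := by
      rw [hxt₀, hyt₀] at hE; linarith
    set t₁ := t₀ + P + d with ht₁
    have ht₁0 : 0 ≤ t₁ := by rw [ht₁]; linarith
    have hxb : dist x (β.1 t₁) = P + (t₁ - s₀) := by
      rw [hks t₁ ht₁0, abs_of_nonneg (by rw [ht₁]; linarith)]
    have hyb : dist y (β.1 t₁) = Q + (t₁ - u₀) := by
      rw [hky t₁ ht₁0, abs_of_nonneg (by rw [ht₁]; linarith)]
    have hb0 : 0 ≤ P + (t₁ - s₀) := by rw [ht₁]; linarith
    have hρb : ρ (P + (t₁ - s₀)) = β.1 t₁ := by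
      rw [hρη (t₁ - s₀) (by linarith), show s₀ + (t₁ - s₀) = t₁ by ring]
    have hbet := tree_between htree hρray (z := y) (b := P + (t₁ - s₀)) hb0 (by
      rw [hρ0, hρb, hyb, ← hd]; linarith)
    rw [hρ0, ← hd] at hbet
    exact ⟨⟨ρ, hρray⟩, hρ0, Quotient.sound ⟨C, hC⟩, hbet.symm⟩

/-- Main geometric lemma: a line whose top end is in the future of the edge and
whose bottom end is not traverses the edge. -/
lemma tree_mgl (htree : IsZeroHyperbolic X) (hgeo : IsGeodesicSpace X) {x y : X}
    (hedge : IsOrientedEdge x y) (γ : GeodesicLine X)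
    (hT : endTop γ ∈ future x y) (hB : endBot γ ∉ future x y) : Traverses γ x y := by
  set d := dist x y with hd
  have hd0 : 0 < d := dist_pos.2 hedge.1
  have hγ : ∀ s t, dist (γ.1 s) (γ.1 t) = |s - t| := by
    intro s t; rw [γ.2.dist_eq, Real.dist_eq]
  obtain ⟨ts, hfx⟩ := tree_proj_line htree hγ x
  obtain ⟨us, hfy⟩ := tree_proj_line htree hγ y
  set P := dist x (γ.1 ts) with hP
  set Q := dist y (γ.1 us) with hQ
  have hP0 : 0 ≤ P := dist_nonneg
  have hQ0 : 0 ≤ Q := dist_nonneg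
  set R := dist x (γ.1 0) with hRd
  set t₀ := R + d with ht₀
  have hts : |ts| ≤ R := by
    have := hfx 0
    rw [show |0 - ts| = |ts| by rw [zero_sub, abs_neg]] at this
    rw [hRd]; linarith
  have hus : |us| ≤ t₀ := by
    have h1 := hfy 0
    rw [show |0 - us| = |us| by rw [zero_sub, abs_neg]] at h1
    have h2 : dist y (γ.1 0) ≤ d + R := by
      calc dist y (γ.1 0) ≤ dist y x + dist x (γ.1 0) := dist_triangle _ _ _
      _ = d + R := by rw [hd, hRd, dist_comm y x]
    rw [ht₀]; linarith
  have hts1 : ts ≤ t₀ := le_trans (le_abs_self ts) (le_trans hts (by rw [ht₀]; linarith))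
  have hts2 : -t₀ ≤ ts := by
    have := neg_abs_le ts
    have h2 : -t₀ ≤ -|ts| := by rw [ht₀]; have := abs_nonneg ts; nlinarith [hts]
    linarith
  have hus1 : us ≤ t₀ := le_trans (le_abs_self us) hus
  have hus2 : -t₀ ≤ us := by
    have := neg_abs_le us
    have h2 : -t₀ ≤ -|us| := by linarith [hus]
    linarith
  -- the positive end condition
  have hEpos := (tree_char htree hgeo x y (posRay γ)).1 hT
  have hpos1 : ∀ t, (posRay γ).1 t = γ.1 t := fun t => rfl
  simp only [hpos1] at hEpos
  rw [← hRd, ← hd, ← ht₀] at hEpos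
  have hxt₀ : dist x (γ.1 t₀) = P + (t₀ - ts) := by
    rw [hfx t₀, abs_of_nonneg (by linarith)]
  have hyt₀ : dist y (γ.1 t₀) = Q + (t₀ - us) := by
    rw [hfy t₀, abs_of_nonneg (by linarith)]
  have hi : P - ts = d + Q - us := by
    rw [hxt₀, hyt₀] at hEpos; linarith
  -- the negative end condition
  have hEneg : ¬ (dist x (γ.1 (-t₀)) = d + dist y (γ.1 (-t₀))) := by
    intro hc
    apply hB
    apply (tree_char htree hgeo x y (negRay γ)).2
    have hneg1 : ∀ t, (negRay γ).1 t = γ.1 (-t) := fun t => rfl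
    simp only [hneg1]
    rw [neg_zero, ← hRd, ← hd, ← ht₀]
    exact hc
  have hxnt₀ : dist x (γ.1 (-t₀)) = P + (t₀ + ts) := by
    rw [hfx (-t₀), abs_of_nonpos (by linarith)]; ring
  have hynt₀ : dist y (γ.1 (-t₀)) = Q + (t₀ + us) := by
    rw [hfy (-t₀), abs_of_nonpos (by linarith)]; ring
  have hii : ¬ (P + ts = d + Q + us) := by
    intro hc
    exact hEneg (by rw [hxnt₀, hynt₀]; linarith)
  have hne : us ≠ ts := by
    intro hc
    rw [hc] at hi
    exact hii (by rw [hc]; linarith)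
  -- four point separation
  have h4 := htree x (γ.1 us) y (γ.1 ts)
  have e1 : dist x (γ.1 us) = P + |us - ts| := hfx us
  have e2 : dist y (γ.1 ts) = Q + |ts - us| := hfy ts
  have e3 : dist (γ.1 us) (γ.1 ts) = |us - ts| := hγ us ts
  have e4 : dist x (γ.1 ts) = P := rfl
  have e5 : dist (γ.1 us) y = Q := dist_comm y (γ.1 us) ▸ rfl
  have habs : |ts - us| = |us - ts| := abs_sub_comm _ _
  have hsep : P + Q + |us - ts| ≤ d := by
    rcases le_max_iff.1 h4 with h' | h'
    · rw [e1, e2, e3, habs, ← hd] at h'; linarith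
    · exfalso
      rw [e1, e2, e4, e5, habs] at h'
      have : |us - ts| ≤ 0 := by linarith
      have h0 : us - ts = 0 := abs_eq_zero.1 (le_antisymm this (abs_nonneg _))
      exact hne (by linarith)
  have hgt : ts < us := by
    rcases lt_trichotomy ts us with h | h | h
    · exact h
    · exact absurd h.symm hne
    · exfalso
      rw [abs_of_neg (by linarith)] at hsep
      linarith
  have habs2 : |us - ts| = us - ts := abs_of_pos (by linarith)
  have hQz : Q = 0 := by
    rw [habs2] at hsep; linarith
  have hy : y = γ.1 us := dist_eq_zero.1 (hQ.symm.trans hQz)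
  have hdus : us = ts + (d - P) := by rw [habs2] at hsep; linarith
  by_cases hPz : P = 0
  · refine ⟨ts, ?_, ?_⟩
    · exact (dist_eq_zero.1 (hP.symm.trans hPz)).symm

    · rw [← hd, hy, hdus, hPz]; norm_num
  · exfalso
    have hPpos : 0 < P := lt_of_le_of_ne hP0 (Ne.symm hPz)
    have h1 : x ≠ γ.1 ts := by
      intro hc
      have h' : (0:ℝ) < dist x (γ.1 ts) := by rw [← hP]; exact hPpos
      rw [← hc, dist_self] at h'
      exact lt_irrefl _ h'
    have h2 : γ.1 (ts - 1) ≠ γ.1 ts := by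
      intro hc
      have h' := hγ (ts - 1) ts
      rw [hc, dist_self, show ts - 1 - ts = -1 by ring, abs_neg, abs_one] at h'
      exact absurd h' (by norm_num)
    have h3 : γ.1 (ts + 1) ≠ γ.1 ts := by
      intro hc
      have h' := hγ (ts + 1) ts
      rw [hc, dist_self, show ts + 1 - ts = 1 by ring, abs_one] at h'
      exact absurd h' (by norm_num)
    have em : dist (γ.1 (ts - 1)) (γ.1 ts) = 1 := by
      rw [hγ, show ts - 1 - ts = -1 by ring, abs_neg, abs_one]
    have ep : dist (γ.1 (ts + 1)) (γ.1 ts) = 1 := by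
      rw [hγ, show ts + 1 - ts = 1 by ring, abs_one]
    have exm : dist x (γ.1 (ts - 1)) = P + 1 := by
      rw [hfx, show ts - 1 - ts = -1 by ring, abs_neg, abs_one]
    have exp' : dist x (γ.1 (ts + 1)) = P + 1 := by
      rw [hfx, show ts + 1 - ts = 1 by ring, abs_one]
    have emp : dist (γ.1 (ts - 1)) (γ.1 (ts + 1)) = 2 := by
      rw [hγ, show ts - 1 - (ts + 1) = -2 by ring, abs_neg, show |(2:ℝ)| = 2 by norm_num]
    have hxz : dist x (γ.1 ts) = P := hP.symm
    have hvz : IsVertex (γ.1 ts) :=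
      tree_three_dirs htree h1 h2 h3 (by rw [hxz, em, exm]; linarith)
        (by rw [hxz, ep, exp']; linarith) (by rw [em, ep, emp]; linarith)
    obtain ⟨hxy', hvx, hvy, hmid⟩ := hedge
    have hzy : dist (γ.1 ts) y = d - P := by
      rw [hy, hγ, show ts - us = -(us - ts) by ring, abs_neg, habs2]
      linarith [hdus]
    rcases hmid (γ.1 ts) (by rw [hxz, hzy, ← hd]; ring) with hc | hc | hc
    · exact h1 hc.symm
    · have : dist (γ.1 ts) y = 0 := by rw [hc, dist_self]
      rw [hzy] at this
      have : us = ts := by rw [hdus]; linarith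
      exact hne this
    · exact hc hvz

lemma future_isClosed (htree : IsZeroHyperbolic X) (hgeo : IsGeodesicSpace X) (x y : X) :
    IsClosed (future x y) := by
  have hQM : Topology.IsQuotientMap (boundaryMk : GeodesicRay X → Boundary X) := isQuotientMap_quot_mk
  rw [← hQM.isClosed_preimage]
  have hset : (boundaryMk ⁻¹' (future x y) : Set (GeodesicRay X)) =
      {β : GeodesicRay X | dist x (β.1 (dist x (β.1 0) + dist x y)) =
        dist x y + dist y (β.1 (dist x (β.1 0) + dist x y))} :=
    Set.ext fun β => tree_char htree hgeo x y β
  rw [hset]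
  have hh : Continuous (fun β : GeodesicRay X => dist x (β.1 0) + dist x y) :=
    (continuous_const.dist ((continuous_apply (0:ℝ)).comp continuous_subtype_val)).add
      continuous_const
  have hh0 : ∀ β : GeodesicRay X, 0 ≤ dist x (β.1 0) + dist x y := by
    intro β; positivity
  have hΦ : Continuous (fun β : GeodesicRay X => β.1 (dist x (β.1 0) + dist x y)) := by
    rw [continuous_iff_continuousAt]
    intro β₀
    set h : GeodesicRay X → ℝ := fun β => dist x (β.1 0) + dist x y with hhdef
    apply Metric.tendsto_nhds.2
    intro ε hε
    have ev1 : ∀ᶠ β : GeodesicRay X in nhds β₀, dist (β.1 (h β₀)) (β₀.1 (h β₀)) < ε / 2 := by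
      have hc : Continuous (fun β : GeodesicRay X => β.1 (h β₀)) :=
        (continuous_apply (h β₀)).comp continuous_subtype_val
      exact Metric.tendsto_nhds.1 (hc.continuousAt (x := β₀)) (ε / 2) (by linarith)
    have ev2 : ∀ᶠ β : GeodesicRay X in nhds β₀, |h β - h β₀| < ε / 2 := by
      have := Metric.tendsto_nhds.1 (hh.continuousAt (x := β₀)) (ε / 2) (by linarith)
      simpa [Real.dist_eq] using this
    filter_upwards [ev1, ev2] with β h1 h2
    have hstep : dist (β.1 (h β)) (β.1 (h β₀)) = |h β - h β₀| :=
      β.2 (h β) (h β₀) (hh0 β) (hh0 β₀)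
    calc dist (β.1 (h β)) (β₀.1 (h β₀))
        ≤ dist (β.1 (h β)) (β.1 (h β₀)) + dist (β.1 (h β₀)) (β₀.1 (h β₀)) := dist_triangle _ _ _
    _ < ε / 2 + ε / 2 := by rw [hstep]; exact add_lt_add h2 h1
    _ = ε := by ring
  exact isClosed_eq (continuous_const.dist hΦ) (continuous_const.add (continuous_const.dist hΦ))

lemma posRay_continuous : Continuous (posRay : GeodesicLine X → GeodesicRay X) := by
  apply Continuous.subtype_mk
  exact continuous_pi fun t => (continuous_apply t).comp continuous_subtype_val

lemma negRay_continuous : Continuous (negRay : GeodesicLine X → GeodesicRay X) := by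
  apply Continuous.subtype_mk
  exact continuous_pi fun t => (continuous_apply (-t)).comp continuous_subtype_val

lemma endTop_continuous : Continuous (endTop : GeodesicLine X → Boundary X) := by
  have h : Continuous (boundaryMk : GeodesicRay X → Boundary X) := continuous_quot_mk
  exact h.comp posRay_continuous

lemma endBot_continuous : Continuous (endBot : GeodesicLine X → Boundary X) := by
  have h : Continuous (boundaryMk : GeodesicRay X → Boundary X) := continuous_quot_mk
  exact h.comp negRay_continuous

end AuxTree2

open MeasureTheory in
/-- If `μ` is a probability measure on geodesic lines with ends
`ν₋, ν₊`, then for every oriented edge `(x,y)` one has `μ(xy) ≥ max(φ(xy), 0)`. -/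
theorem measure_of_edge_ge_flow {X : Type*} [MetricSpace X] [CompleteSpace X] [LocallyCompactSpace X]
    [MeasurableSpace X] [BorelSpace X]
    (hgeo : IsGeodesicSpace X) (htree : IsZeroHyperbolic X) (x₀ : X)
    (νneg νpos : MeasureTheory.Measure (Boundary X))
    [MeasureTheory.IsProbabilityMeasure νneg] [MeasureTheory.IsProbabilityMeasure νpos]
    (hant : AntipodalMeasures νneg νpos)
    (μ : Measure (GeodesicLine X)) [IsProbabilityMeasure μ]
    (hends₁ : μ.map endBot = νneg) (hends₂ : μ.map endTop = νpos) :
    ∀ x y : X, IsOrientedEdge x y →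
      max (edgeFlow νneg νpos x y) 0 ≤ (μ {γ | Traverses γ x y}).toReal := by
  intro x y hedge
  have hFmeas : MeasurableSet (future x y) := (future_isClosed htree hgeo x y).measurableSet
  have hmTop : Measurable (endTop : GeodesicLine X → Boundary X) := endTop_continuous.measurable
  have hmBot : Measurable (endBot : GeodesicLine X → Boundary X) := endBot_continuous.measurable
  set A : Set (GeodesicLine X) := endTop ⁻¹' (future x y) with hAdef
  set B : Set (GeodesicLine X) := endBot ⁻¹' (future x y) with hBdef
  have hAmeas : MeasurableSet A := hmTop hFmeas
  have hBmeas : MeasurableSet B := hmBot hFmeas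
  have hsub : A \ B ⊆ {γ | Traverses γ x y} := by
    rintro γ ⟨h1, h2⟩
    exact tree_mgl htree hgeo hedge γ h1 h2
  have hmapT : νpos (future x y) = μ A := by
    rw [← hends₂, Measure.map_apply hmTop hFmeas]
  have hmapB : νneg (future x y) = μ B := by
    rw [← hends₁, Measure.map_apply hmBot hFmeas]
  apply max_le
  · show signedFlow νneg νpos (future x y) ≤ _
    show (νpos (future x y)).toReal - (νneg (future x y)).toReal ≤ _
    rw [hmapT, hmapB]
    have h1 : μ (A ∩ B) + μ (A \ B) = μ A := measure_inter_add_diff A hBmeas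
    have h2 := congrArg ENNReal.toReal h1
    rw [ENNReal.toReal_add (measure_ne_top μ _) (measure_ne_top μ _)] at h2
    have h3 : (μ (A \ B)).toReal ≤ (μ {γ | Traverses γ x y}).toReal :=
      ENNReal.toReal_mono (measure_ne_top μ _) (measure_mono hsub)
    have h4 : (μ (A ∩ B)).toReal ≤ (μ B).toReal :=
      ENNReal.toReal_mono (measure_ne_top μ _) (measure_mono Set.inter_subset_right)
    linarith
  · exact ENNReal.toReal_nonneg
end

section
/- Let X be a complete, locally compact metric tree and let μ be a Borel probability measure on the set of complete unit-speed geodesics of X. Then μ is d²-cyclically monotone (i.e. for all real numbers r < s the coupling (e_r,e_s)_#μ is cyclically monotone for the cost d(·,·)²) if and only if μ⊗μ-almost every pair of geodesics is non-antagonist. -/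
open MeasureTheory Metric Set
open scoped ENNReal NNReal

/- ============== auxiliary development ============== -/

noncomputable section

namespace NABasic

open Set

variable {X : Type*} [MetricSpace X]

/-- Betweenness. -/
def Btw (x m y : X) : Prop := dist x m + dist m y = dist x y

lemma btw_unique (htree : IsZeroHyperbolic X) {x y m m' : X}
    (h : Btw x m y) (h' : Btw x m' y) (hd : dist x m = dist x m') : m = m' := by
  have h4 := htree x y m m'
  have e1 : dist x m + dist y m' = dist x y := by
    rw [dist_comm y m', hd]; exact h'
  have e2 : dist x m' + dist y m = dist x y := by
    rw [dist_comm y m, ← hd]; exact h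
  have hmm : dist x y + dist m m' ≤ dist x y := by
    rcases max_le_iff.mpr ⟨le_of_eq e1, le_of_eq e2⟩ with h5
    exact h4.trans h5
  have : dist m m' ≤ 0 := by linarith
  exact dist_le_zero.mp this

/-- Gromov product inequality from the four point condition. -/
lemma gromov_ineq (htree : IsZeroHyperbolic X) (p x y z : X) :
    min (dist p x + dist p z - dist x z) (dist p y + dist p z - dist y z)
      ≤ dist p x + dist p y - dist x y := by
  have h := htree x y z p
  rcases le_max_iff.mp h with h' | h'
  · refine min_le_of_left_le ?_
    rw [dist_comm p x, dist_comm p y, dist_comm p z]; linarith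
  · refine min_le_of_right_le ?_
    rw [dist_comm p x, dist_comm p y, dist_comm p z]; linarith

section Seg

variable (hgeo : IsGeodesicSpace X)

/-- canonical geodesic parametrization from `x` to `y` on `[0, dist x y]`. -/
def seg (x y : X) : ℝ → X := (hgeo x y).choose

lemma seg_zero (x y : X) : seg hgeo x y 0 = x := (hgeo x y).choose_spec.1

lemma seg_last (x y : X) : seg hgeo x y (dist x y) = y := (hgeo x y).choose_spec.2.1

lemma seg_dist (x y : X) : ∀ a ∈ Icc (0:ℝ) (dist x y), ∀ b ∈ Icc (0:ℝ) (dist x y),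
    dist (seg hgeo x y a) (seg hgeo x y b) = |a - b| := (hgeo x y).choose_spec.2.2

lemma seg_dist_left (x y : X) {a : ℝ} (ha : a ∈ Icc (0:ℝ) (dist x y)) :
    dist x (seg hgeo x y a) = a := by
  have h0 : (0:ℝ) ∈ Icc (0:ℝ) (dist x y) := ⟨le_rfl, dist_nonneg⟩
  have := seg_dist hgeo x y 0 h0 a ha
  rw [seg_zero] at this
  rw [this, abs_of_nonpos (by linarith [ha.1])]; ring

lemma seg_dist_right (x y : X) {a : ℝ} (ha : a ∈ Icc (0:ℝ) (dist x y)) :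
    dist (seg hgeo x y a) y = dist x y - a := by
  have h1 : dist x y ∈ Icc (0:ℝ) (dist x y) := ⟨dist_nonneg, le_rfl⟩
  have := seg_dist hgeo x y a ha (dist x y) h1
  rw [seg_last] at this
  rw [this, abs_of_nonpos (by linarith [ha.2])]; ring

lemma seg_btw (x y : X) {a : ℝ} (ha : a ∈ Icc (0:ℝ) (dist x y)) :
    Btw x (seg hgeo x y a) y := by
  unfold Btw
  rw [seg_dist_left hgeo x y ha, seg_dist_right hgeo x y ha]; ring

include hgeo in
/-- Medians exist. -/
lemma median (htree : IsZeroHyperbolic X) (x y z : X) :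
    ∃ m : X, Btw x m y ∧ Btw x m z ∧ Btw y m z := by
  set h := (dist x y + dist x z - dist y z) / 2 with hh
  have h0 : 0 ≤ h := by
    have := dist_triangle y x z
    rw [dist_comm y x] at this
    simp only [hh]; linarith
  have hxy : h ≤ dist x y := by
    have := dist_triangle x z y
    rw [dist_comm z y] at this
    simp only [hh]; linarith [dist_triangle x y z]
  have hmem : h ∈ Icc (0:ℝ) (dist x y) := ⟨h0, hxy⟩
  set m := seg hgeo x y h with hm
  have hxm : dist x m = h := seg_dist_left hgeo x y hmem
  have hmy : dist m y = dist x y - h := seg_dist_right hgeo x y hmem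
  have hbxy : Btw x m y := seg_btw hgeo x y hmem
  -- prove dist m z ≤ dist x z - h via Gromov
  have hg := gromov_ineq htree x m z y
  have e1 : dist x m + dist x y - dist m y = 2 * h := by
    rw [hxm, hmy]; ring
  have e2 : dist x z + dist x y - dist z y = 2 * h := by
    rw [dist_comm z y]; simp only [hh]; ring
  rw [e1, e2, min_self] at hg
  have hmz_le : dist m z ≤ dist x z - h := by rw [hxm] at hg; linarith
  have hmz_ge : dist x z - h ≤ dist m z := by
    have := dist_triangle x m z
    rw [hxm] at this; linarith
  have hmz : dist m z = dist x z - h := le_antisymm hmz_le hmz_ge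
  refine ⟨m, hbxy, ?_, ?_⟩
  · unfold Btw; rw [hxm, hmz]; ring
  · unfold Btw
    rw [dist_comm y m, hmy, hmz]
    simp only [hh]; ring

/-- Uniqueness of isometric arcs. -/
lemma arc_unique (htree : IsZeroHyperbolic X) {x y : X} {g g' : ℝ → X}
    (hg0 : g 0 = x) (hgD : g (dist x y) = y)
    (hg : ∀ a ∈ Icc (0:ℝ) (dist x y), ∀ b ∈ Icc (0:ℝ) (dist x y), dist (g a) (g b) = |a - b|)
    (hg0' : g' 0 = x) (hgD' : g' (dist x y) = y)
    (hg' : ∀ a ∈ Icc (0:ℝ) (dist x y), ∀ b ∈ Icc (0:ℝ) (dist x y), dist (g' a) (g' b) = |a - b|)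
    {τ : ℝ} (hτ : τ ∈ Icc (0:ℝ) (dist x y)) : g τ = g' τ := by
  have h0 : (0:ℝ) ∈ Icc (0:ℝ) (dist x y) := ⟨le_rfl, dist_nonneg⟩
  have h1 : dist x y ∈ Icc (0:ℝ) (dist x y) := ⟨dist_nonneg, le_rfl⟩
  have d1 : dist x (g τ) = τ := by
    have := hg 0 h0 τ hτ; rw [hg0] at this; rw [this, abs_of_nonpos (by linarith [hτ.1])]; ring
  have d2 : dist (g τ) y = dist x y - τ := by
    have := hg τ hτ _ h1; rw [hgD] at this; rw [this, abs_of_nonpos (by linarith [hτ.2])]; ring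
  have d1' : dist x (g' τ) = τ := by
    have := hg' 0 h0 τ hτ; rw [hg0'] at this
    rw [this, abs_of_nonpos (by linarith [hτ.1])]; ring
  have d2' : dist (g' τ) y = dist x y - τ := by
    have := hg' τ hτ _ h1; rw [hgD'] at this
    rw [this, abs_of_nonpos (by linarith [hτ.2])]; ring
  have b1 : Btw x (g τ) y := by unfold Btw; rw [d1, d2]; ring
  have b2 : Btw x (g' τ) y := by unfold Btw; rw [d1', d2']; ring
  exact btw_unique htree b1 b2 (by rw [d1, d1'])

end Seg

lemma line_dist (γ : GeodesicLine X) (a b : ℝ) : dist (γ.1 a) (γ.1 b) = |a - b| := by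
  rw [γ.2.dist_eq, Real.dist_eq]

lemma line_inj (γ : GeodesicLine X) : Function.Injective γ.1 := γ.2.injective

lemma not_antagonist_self (γ : GeodesicLine X) : ¬ Antagonist γ γ := by
  rintro ⟨x, y, hxy, t, u, v, w, htu, hvw, ht, hu, hv, hw⟩
  have h1 : u = v := line_inj γ (by rw [hu, hv])
  have h2 : t = w := line_inj γ (by rw [ht, hw])
  linarith

end NABasic
end
noncomputable section
namespace NAProper
open Set Metric NABasic

variable {X : Type*} [MetricSpace X]

lemma properSpace_of_geodesic (hgeo : IsGeodesicSpace X) [CompleteSpace X]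
    [LocallyCompactSpace X] : ProperSpace X := by
  rcases isEmpty_or_nonempty X with hX | hX
  · exact ⟨fun x _ => (IsEmpty.false x).elim⟩
  obtain ⟨x₀⟩ := hX
  set A : Set ℝ := {R | IsCompact (closedBall x₀ R)} with hA
  have hdown : ∀ {R R' : ℝ}, R' ∈ A → R ≤ R' → R ∈ A := fun {R R'} h hR =>
    h.of_isClosed_subset Metric.isClosed_closedBall (closedBall_subset_closedBall hR)
  have hsmall : ∀ x : X, ∃ ε : ℝ, 0 < ε ∧ IsCompact (closedBall x ε) := by
    intro x
    obtain ⟨K, hK, hKn⟩ := exists_compact_mem_nhds x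
    obtain ⟨ε, hε, hball⟩ := Metric.nhds_basis_closedBall.mem_iff.mp hKn
    exact ⟨ε, hε, hK.of_isClosed_subset Metric.isClosed_closedBall hball⟩
  have hpick : ∀ (y : X) (R : ℝ), 0 ≤ R → R ≤ dist x₀ y →
      ∃ z : X, dist x₀ z ≤ R ∧ dist z y ≤ dist x₀ y - R := by
    intro y R hR0 hRd
    refine ⟨seg hgeo x₀ y R, ?_, ?_⟩
    · rw [seg_dist_left hgeo x₀ y ⟨hR0, hRd⟩]
    · rw [seg_dist_right hgeo x₀ y ⟨hR0, hRd⟩]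
  have hup : ∀ R ∈ A, 0 ≤ R → ∃ δ : ℝ, 0 < δ ∧ R + δ ∈ A := by
    intro R hRA hR0
    set ε : X → ℝ := fun x => (hsmall x).choose with hε
    have hεpos : ∀ x, 0 < ε x := fun x => (hsmall x).choose_spec.1
    have hεcpt : ∀ x, IsCompact (closedBall x (ε x)) := fun x => (hsmall x).choose_spec.2
    have hsub : closedBall x₀ R ⊆ ⋃ x : X, ball x (ε x / 2) := by
      intro z _
      exact mem_iUnion.mpr ⟨z, by simpa using half_pos (hεpos z)⟩
    obtain ⟨t, ht⟩ := hRA.elim_finite_subcover (fun x : X => ball x (ε x / 2))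
      (fun x => isOpen_ball) hsub
    have hx₀K : x₀ ∈ closedBall x₀ R := mem_closedBall_self hR0
    have htne : t.Nonempty := by
      obtain ⟨i, hi, _⟩ := mem_iUnion₂.mp (ht hx₀K)
      exact ⟨i, hi⟩
    set δ : ℝ := t.inf' htne (fun x => ε x / 2) with hδ
    have hδpos : 0 < δ := by
      rw [hδ, Finset.lt_inf'_iff]
      exact fun x _ => half_pos (hεpos x)
    refine ⟨δ, hδpos, ?_⟩
    have hC : IsCompact (⋃ x ∈ t, closedBall x (ε x)) :=
      t.finite_toSet.isCompact_biUnion (fun x _ => hεcpt x)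
    refine hC.of_isClosed_subset Metric.isClosed_closedBall ?_
    intro y hy
    have hDy : dist x₀ y ≤ R + δ := mem_closedBall'.mp hy
    obtain ⟨z, hz1, hz2⟩ := hpick y (min (dist x₀ y) R) (le_min dist_nonneg hR0)
      (min_le_left _ _)
    have hzK : z ∈ closedBall x₀ R := by
      rw [mem_closedBall, dist_comm]; exact hz1.trans (min_le_right _ _)
    obtain ⟨i, hi, hzi⟩ := mem_iUnion₂.mp (ht hzK)
    have hδi : δ ≤ ε i / 2 := Finset.inf'_le _ hi
    have hzy : dist z y ≤ δ := by
      rcases le_total (dist x₀ y) R with h | h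
      · calc dist z y ≤ dist x₀ y - min (dist x₀ y) R := hz2
          _ = 0 := by rw [min_eq_left h]; ring
          _ ≤ δ := hδpos.le
      · calc dist z y ≤ dist x₀ y - min (dist x₀ y) R := hz2
          _ = dist x₀ y - R := by rw [min_eq_right h]
          _ ≤ δ := by linarith
    refine mem_iUnion₂.mpr ⟨i, hi, ?_⟩
    have : dist y i ≤ dist y z + dist z i := dist_triangle y z i
    have hzi' : dist z i < ε i / 2 := mem_ball.mp hzi
    rw [mem_closedBall]
    rw [dist_comm z y] at hzy
    linarith
  have hlim : ∀ R : ℝ, 0 < R → (∀ R', 0 ≤ R' → R' < R → R' ∈ A) → R ∈ A := by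
    intro R hR0 hbelow
    refine TotallyBounded.isCompact_of_isClosed ?_ Metric.isClosed_closedBall
    rw [Metric.totallyBounded_iff]
    intro ε hε
    rcases le_or_gt R (ε / 3) with hsmallR | hbigR
    · refine ⟨{x₀}, Set.finite_singleton _, ?_⟩
      intro y hy
      simp only [mem_iUnion₂, mem_singleton_iff, exists_prop]
      refine ⟨x₀, rfl, ?_⟩
      rw [mem_ball]
      have := mem_closedBall.mp hy
      linarith
    · set R' := R - ε / 3 with hR'
      have hR'A : R' ∈ A := hbelow R' (by rw [hR']; linarith) (by rw [hR']; linarith)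
      have := hR'A.totallyBounded
      rw [Metric.totallyBounded_iff] at this
      obtain ⟨N, hNfin, hN⟩ := this (ε/3) (by linarith)
      refine ⟨N, hNfin, ?_⟩
      intro y hy
      have hDy : dist x₀ y ≤ R := mem_closedBall'.mp hy
      obtain ⟨z, hz1, hz2⟩ := hpick y (min (dist x₀ y) R') (le_min dist_nonneg (by rw [hR']; linarith))
        (min_le_left _ _)
      have hzK : z ∈ closedBall x₀ R' := by
        rw [mem_closedBall, dist_comm]; exact hz1.trans (min_le_right _ _)
      obtain ⟨w, hw, hzw⟩ := mem_iUnion₂.mp (hN hzK)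
      have hzy : dist z y ≤ ε / 3 := by
        rcases le_total (dist x₀ y) R' with h | h
        · calc dist z y ≤ dist x₀ y - min (dist x₀ y) R' := hz2
            _ = 0 := by rw [min_eq_left h]; ring
            _ ≤ ε / 3 := by linarith
        · calc dist z y ≤ dist x₀ y - min (dist x₀ y) R' := hz2
            _ = dist x₀ y - R' := by rw [min_eq_right h]
            _ ≤ ε / 3 := by rw [hR']; linarith
      refine mem_iUnion₂.mpr ⟨w, hw, ?_⟩
      rw [mem_ball]
      have h1 : dist y w ≤ dist y z + dist z w := dist_triangle y z w
      have h2 : dist z w < ε / 3 := mem_ball.mp hzw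
      rw [dist_comm z y] at hzy
      linarith
  have hall : ∀ R : ℝ, 0 ≤ R → R ∈ A := by
    by_contra hcon
    push_neg at hcon
    obtain ⟨R₀, hR₀0, hR₀⟩ := hcon
    set B : Set ℝ := {R | 0 ≤ R ∧ R ∉ A} with hB
    have hBne : B.Nonempty := ⟨R₀, hR₀0, hR₀⟩
    have hBbd : BddBelow B := ⟨0, fun b hb => hb.1⟩
    set m : ℝ := sInf B with hm
    obtain ⟨ε₀, hε₀pos, hε₀⟩ := hsmall x₀
    have hε₀m : ε₀ ≤ m := by
      refine le_csInf hBne ?_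
      intro b hb
      by_contra hbe
      push_neg at hbe
      exact hb.2 (hdown hε₀ hbe.le)
    have hmpos : 0 < m := lt_of_lt_of_le hε₀pos hε₀m
    have hbelow : ∀ R', 0 ≤ R' → R' < m → R' ∈ A := by
      intro R' h0 hR'
      by_contra hR'A
      exact absurd (csInf_le hBbd ⟨h0, hR'A⟩) (not_le.mpr hR')
    have hmA : m ∈ A := hlim m hmpos hbelow
    obtain ⟨δ, hδpos, hδA⟩ := hup m hmA hmpos.le
    obtain ⟨b, hbB, hbm⟩ := Real.lt_sInf_add_pos hBne hδpos
    rw [← hm] at hbm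
    exact hbB.2 (hdown hδA (by linarith))
  refine ⟨fun x r => ?_⟩
  have hsub : closedBall x r ⊆ closedBall x₀ (dist x₀ x + max r 0) := by
    intro y hy
    rw [mem_closedBall, dist_comm]
    calc dist x₀ y ≤ dist x₀ x + dist x y := dist_triangle _ _ _
      _ ≤ dist x₀ x + max r 0 := by
          have h1 := mem_closedBall.mp hy
          have h2 := le_max_left r 0
          rw [dist_comm x y]
          linarith
  exact (hall _ (by positivity)).of_isClosed_subset Metric.isClosed_closedBall hsub

end NAProper
end
noncomputable section
namespace NAPot
open Set MeasureTheory NABasic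

variable {X : Type*} [MetricSpace X] {ι : Type*} [Fintype ι]

/-! measure helpers -/

lemma vol_finite_diff {A B F : Set ℝ} (hF : F.Finite)
    (h1 : A ⊆ B ∪ F) (h2 : B ⊆ A ∪ F) : volume A = volume B := by
  apply le_antisymm
  · calc volume A ≤ volume (B ∪ F) := measure_mono h1
      _ ≤ volume B + volume F := measure_union_le _ _
      _ = volume B := by rw [hF.measure_zero, add_zero]
  · calc volume B ≤ volume (A ∪ F) := measure_mono h2
      _ ≤ volume A + volume F := measure_union_le _ _
      _ = volume A := by rw [hF.measure_zero, add_zero]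

lemma vol_split {A : Set ℝ} {D c : ℝ} (hA : A ⊆ Icc 0 D) (hc0 : 0 ≤ c) (hcD : c ≤ D) :
    volume A = volume (A ∩ Icc 0 c) + volume (A ∩ Icc c D) := by
  have h := measure_inter_add_diff (μ := volume) A (measurableSet_Icc (a := (0:ℝ)) (b := c))
  rw [← h]
  congr 1
  refine (vol_finite_diff (Set.finite_singleton c) ?_ ?_).symm
  · intro τ hτ
    rcases eq_or_ne τ c with h | h
    · exact Or.inr (by simp [h])
    · refine Or.inl ⟨hτ.1, ?_⟩
      intro hmem
      have h1 := hτ.2.1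
      have h2 := hmem.2
      exact h (le_antisymm h2 h1)
  · intro τ hτ
    refine Or.inl ⟨hτ.1, ?_, (hA hτ.1).2⟩
    by_contra hlt
    push_neg at hlt
    exact hτ.2 ⟨(hA hτ.1).1, hlt.le⟩

lemma vol_ne_top {A : Set ℝ} {D : ℝ} (hA : A ⊆ Icc 0 D) : volume A ≠ ⊤ := by
  have h := measure_mono (μ := volume) hA
  refine ne_top_of_le_ne_top ?_ h
  rw [Real.volume_Icc]
  exact ENNReal.ofReal_ne_top

lemma vol_toReal_le {A : Set ℝ} {D : ℝ} (hD : 0 ≤ D) (hA : A ⊆ Icc 0 D) :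
    (volume A).toReal ≤ D := by
  have h1 : volume A ≤ ENNReal.ofReal D := by
    have := measure_mono (μ := volume) hA
    rwa [Real.volume_Icc, sub_zero] at this
  calc (volume A).toReal ≤ (ENNReal.ofReal D).toReal :=
      ENNReal.toReal_mono ENNReal.ofReal_ne_top h1
    _ = D := ENNReal.toReal_ofReal hD

/-! the match/orientation predicates -/

variable (Γ : ι → GeodesicLine X) (r s : ℝ)

def Match (g : ℝ → X) (i : ι) (τ : ℝ) : Prop := ∃ α ∈ Icc r s, (Γ i).1 α = g τ

def Fwd (g : ℝ → X) (D : ℝ) (i : ι) (τ : ℝ) : Prop :=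
  ∃ α ∈ Icc r s, (Γ i).1 α = g τ ∧
    ∀ τ' ∈ Icc (0:ℝ) D, ∀ α' ∈ Icc r s, (Γ i).1 α' = g τ' → α' - α = τ' - τ

def Bwd (g : ℝ → X) (D : ℝ) (i : ι) (τ : ℝ) : Prop :=
  ∃ α ∈ Icc r s, (Γ i).1 α = g τ ∧
    ∀ τ' ∈ Icc (0:ℝ) D, ∀ α' ∈ Icc r s, (Γ i).1 α' = g τ' → α' - α = -(τ' - τ)

def posSet (g : ℝ → X) (D : ℝ) : Set ℝ := {τ | τ ∈ Icc (0:ℝ) D ∧ ∃ i, Fwd Γ r s g D i τ}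

def negSet (g : ℝ → X) (D : ℝ) : Set ℝ := {τ | τ ∈ Icc (0:ℝ) D ∧ ∃ i, Bwd Γ r s g D i τ}

lemma posSet_subset (g : ℝ → X) (D : ℝ) : posSet Γ r s g D ⊆ Icc 0 D := fun _ h => h.1
lemma negSet_subset (g : ℝ → X) (D : ℝ) : negSet Γ r s g D ⊆ Icc 0 D := fun _ h => h.1

/-- the signed length functional of the oriented arc from `x` to `y`. -/
def Fv (hgeo : IsGeodesicSpace X) (x y : X) : ℝ :=
  (volume (posSet Γ r s (seg hgeo x y) (dist x y))).toReal
  - (volume (negSet Γ r s (seg hgeo x y) (dist x y))).toReal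

lemma Fv_abs_le (hgeo : IsGeodesicSpace X) (x y : X) : |Fv Γ r s hgeo x y| ≤ dist x y := by
  have h1 := vol_toReal_le dist_nonneg (posSet_subset Γ r s (seg hgeo x y) (dist x y))
  have h2 := vol_toReal_le dist_nonneg (negSet_subset Γ r s (seg hgeo x y) (dist x y))
  have h3 : (0:ℝ) ≤ (volume (posSet Γ r s (seg hgeo x y) (dist x y))).toReal :=
    ENNReal.toReal_nonneg
  have h4 : (0:ℝ) ≤ (volume (negSet Γ r s (seg hgeo x y) (dist x y))).toReal :=
    ENNReal.toReal_nonneg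
  rw [Fv, abs_le]
  constructor <;> linarith

/-! transfer lemmas between an arc and a subarc -/

section Transfer

variable {g gl : ℝ → X} {D e c : ℝ}

lemma fwd_restrict (he : 0 ≤ e) (heD : e + c ≤ D)
    (heq : ∀ τ ∈ Icc (0:ℝ) c, gl τ = g (e + τ)) {τ : ℝ} (hτ : τ ∈ Icc (0:ℝ) c) {i : ι}
    (hf : Fwd Γ r s g D i (e + τ)) : Fwd Γ r s gl c i τ := by
  obtain ⟨α, hα, hmatch, hcond⟩ := hf
  refine ⟨α, hα, by rw [heq τ hτ]; exact hmatch, ?_⟩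
  intro τ' hτ' α' hα' hm'
  have := hcond (e + τ') ⟨by linarith [hτ'.1], by linarith [hτ'.2]⟩ α' hα'
    (by rw [← heq τ' hτ']; exact hm')
  linarith

lemma bwd_restrict (he : 0 ≤ e) (heD : e + c ≤ D)
    (heq : ∀ τ ∈ Icc (0:ℝ) c, gl τ = g (e + τ)) {τ : ℝ} (hτ : τ ∈ Icc (0:ℝ) c) {i : ι}
    (hf : Bwd Γ r s g D i (e + τ)) : Bwd Γ r s gl c i τ := by
  obtain ⟨α, hα, hmatch, hcond⟩ := hf
  refine ⟨α, hα, by rw [heq τ hτ]; exact hmatch, ?_⟩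
  intro τ' hτ' α' hα' hm'
  have := hcond (e + τ') ⟨by linarith [hτ'.1], by linarith [hτ'.2]⟩ α' hα'
    (by rw [← heq τ' hτ']; exact hm')
  linarith

lemma fwd_extend (he : 0 ≤ e) (heD : e + c ≤ D)
    (hgiso : ∀ a ∈ Icc (0:ℝ) D, ∀ b ∈ Icc (0:ℝ) D, dist (g a) (g b) = |a - b|)
    (heq : ∀ τ ∈ Icc (0:ℝ) c, gl τ = g (e + τ)) {τ τ₂ : ℝ} (hτ : τ ∈ Icc (0:ℝ) c)
    (hτ₂ : τ₂ ∈ Icc (0:ℝ) c) (hne : τ₂ ≠ τ) {i : ι} (hm2 : Match Γ r s gl i τ₂)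
    (hf : Fwd Γ r s gl c i τ) : Fwd Γ r s g D i (e + τ) := by
  obtain ⟨α, hα, hmatch, hcond⟩ := hf
  obtain ⟨α₂, hα₂, hmatch₂⟩ := hm2
  have hα₂eq : α₂ - α = τ₂ - τ := hcond τ₂ hτ₂ α₂ hα₂ hmatch₂
  have hmg : (Γ i).1 α = g (e + τ) := by rw [← heq τ hτ]; exact hmatch
  have hmg₂ : (Γ i).1 α₂ = g (e + τ₂) := by rw [← heq τ₂ hτ₂]; exact hmatch₂
  refine ⟨α, hα, hmg, ?_⟩
  intro τ' hτ' α' hα' hm'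
  have hmem : e + τ ∈ Icc (0:ℝ) D := ⟨by linarith [hτ.1], by linarith [hτ.2]⟩
  have hmem₂ : e + τ₂ ∈ Icc (0:ℝ) D := ⟨by linarith [hτ₂.1], by linarith [hτ₂.2]⟩
  have habs1 : |α' - α| = |τ' - (e + τ)| := by
    have h1 : dist ((Γ i).1 α') ((Γ i).1 α) = |α' - α| := line_dist _ _ _
    rw [hm', hmg] at h1
    rw [← h1, hgiso τ' hτ' (e + τ) hmem]
  have habs2 : |α' - α₂| = |τ' - (e + τ₂)| := by
    have h1 : dist ((Γ i).1 α') ((Γ i).1 α₂) = |α' - α₂| := line_dist _ _ _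
    rw [hm', hmg₂] at h1
    rw [← h1, hgiso τ' hτ' (e + τ₂) hmem₂]
  rcases abs_eq_abs.mp habs1 with h1 | h1
  · linarith
  · rcases abs_eq_abs.mp habs2 with h2 | h2
    · linarith
    · exfalso
      have : τ₂ = τ := by linarith
      exact hne this

lemma bwd_extend (he : 0 ≤ e) (heD : e + c ≤ D)
    (hgiso : ∀ a ∈ Icc (0:ℝ) D, ∀ b ∈ Icc (0:ℝ) D, dist (g a) (g b) = |a - b|)
    (heq : ∀ τ ∈ Icc (0:ℝ) c, gl τ = g (e + τ)) {τ τ₂ : ℝ} (hτ : τ ∈ Icc (0:ℝ) c)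
    (hτ₂ : τ₂ ∈ Icc (0:ℝ) c) (hne : τ₂ ≠ τ) {i : ι} (hm2 : Match Γ r s gl i τ₂)
    (hf : Bwd Γ r s gl c i τ) : Bwd Γ r s g D i (e + τ) := by
  obtain ⟨α, hα, hmatch, hcond⟩ := hf
  obtain ⟨α₂, hα₂, hmatch₂⟩ := hm2
  have hα₂eq : α₂ - α = -(τ₂ - τ) := hcond τ₂ hτ₂ α₂ hα₂ hmatch₂
  have hmg : (Γ i).1 α = g (e + τ) := by rw [← heq τ hτ]; exact hmatch
  have hmg₂ : (Γ i).1 α₂ = g (e + τ₂) := by rw [← heq τ₂ hτ₂]; exact hmatch₂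
  refine ⟨α, hα, hmg, ?_⟩
  intro τ' hτ' α' hα' hm'
  have hmem : e + τ ∈ Icc (0:ℝ) D := ⟨by linarith [hτ.1], by linarith [hτ.2]⟩
  have hmem₂ : e + τ₂ ∈ Icc (0:ℝ) D := ⟨by linarith [hτ₂.1], by linarith [hτ₂.2]⟩
  have habs1 : |α' - α| = |τ' - (e + τ)| := by
    have h1 : dist ((Γ i).1 α') ((Γ i).1 α) = |α' - α| := line_dist _ _ _
    rw [hm', hmg] at h1
    rw [← h1, hgiso τ' hτ' (e + τ) hmem]
  have habs2 : |α' - α₂| = |τ' - (e + τ₂)| := by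
    have h1 : dist ((Γ i).1 α') ((Γ i).1 α₂) = |α' - α₂| := line_dist _ _ _
    rw [hm', hmg₂] at h1
    rw [← h1, hgiso τ' hτ' (e + τ₂) hmem₂]
  rcases abs_eq_abs.mp habs1 with h1 | h1
  · rcases abs_eq_abs.mp habs2 with h2 | h2
    · exfalso
      have : τ₂ = τ := by linarith
      exact hne this
    · linarith
  · linarith

/-- the exceptional set: points with a unique match for `i`. -/
def Exc (i : ι) : Set ℝ :=
  {τ | τ ∈ Icc (0:ℝ) c ∧ Match Γ r s gl i τ ∧ ∀ τ₂ ∈ Icc (0:ℝ) c, Match Γ r s gl i τ₂ → τ₂ = τ}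

lemma exc_subsingleton (i : ι) : (Exc Γ r s (gl := gl) (c := c) i).Subsingleton := by
  intro τ hτ τ' hτ'
  exact (hτ.2.2 τ' hτ'.1 hτ'.2.1).symm

lemma vol_piece_pos (he : 0 ≤ e) (hc : 0 ≤ c) (heD : e + c ≤ D)
    (hgiso : ∀ a ∈ Icc (0:ℝ) D, ∀ b ∈ Icc (0:ℝ) D, dist (g a) (g b) = |a - b|)
    (heq : ∀ τ ∈ Icc (0:ℝ) c, gl τ = g (e + τ)) :
    volume (posSet Γ r s gl c) = volume (posSet Γ r s g D ∩ Icc e (e + c)) := by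
  have hshiftp : volume (posSet Γ r s g D ∩ Icc e (e + c))
      = volume ((fun τ => e + τ) ⁻¹' (posSet Γ r s g D ∩ Icc e (e + c))) :=
    (measure_preimage_add volume e _).symm
  rw [hshiftp]
  refine vol_finite_diff (F := ⋃ i, Exc Γ r s (gl := gl) (c := c) i)
    (Set.finite_iUnion fun i => (exc_subsingleton Γ r s i).finite) ?_ ?_
  · rintro τ ⟨hτc, i, hfwd⟩
    by_cases hexc : τ ∈ Exc Γ r s (gl := gl) (c := c) i
    · exact Or.inr (mem_iUnion.mpr ⟨i, hexc⟩)
    · left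
      have hmatch : Match Γ r s gl i τ := by
        obtain ⟨α, hα, hm, _⟩ := hfwd
        exact ⟨α, hα, hm⟩
      have : ¬ (∀ τ₂ ∈ Icc (0:ℝ) c, Match Γ r s gl i τ₂ → τ₂ = τ) := by
        intro hall
        exact hexc ⟨hτc, hmatch, hall⟩
      push_neg at this
      obtain ⟨τ₂, hτ₂, hm₂, hne⟩ := this
      have hext := fwd_extend Γ r s he heD hgiso heq hτc hτ₂ hne hm₂ hfwd
      have h1 : e + τ ∈ Icc (0:ℝ) D := ⟨by linarith [hτc.1], by linarith [hτc.2]⟩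
      have h2 : e + τ ∈ Icc e (e + c) := ⟨by linarith [hτc.1], by linarith [hτc.2]⟩
      show e + τ ∈ posSet Γ r s g D ∩ Icc e (e + c)
      exact ⟨⟨h1, i, hext⟩, h2⟩
  · intro τ hτ
    have hτe : e + τ ∈ Icc e (e + c) := hτ.2
    have hmem : e + τ ∈ Icc (0:ℝ) D := hτ.1.1
    obtain ⟨i, hfwd⟩ := hτ.1.2
    left
    have hτc : τ ∈ Icc (0:ℝ) c := ⟨by linarith [hτe.1], by linarith [hτe.2]⟩
    exact ⟨hτc, i, fwd_restrict Γ r s he heD heq hτc hfwd⟩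

lemma vol_piece_neg (he : 0 ≤ e) (hc : 0 ≤ c) (heD : e + c ≤ D)
    (hgiso : ∀ a ∈ Icc (0:ℝ) D, ∀ b ∈ Icc (0:ℝ) D, dist (g a) (g b) = |a - b|)
    (heq : ∀ τ ∈ Icc (0:ℝ) c, gl τ = g (e + τ)) :
    volume (negSet Γ r s gl c) = volume (negSet Γ r s g D ∩ Icc e (e + c)) := by
  have hshift : volume (negSet Γ r s g D ∩ Icc e (e + c))
      = volume ((fun τ => e + τ) ⁻¹' (negSet Γ r s g D ∩ Icc e (e + c))) :=
    (measure_preimage_add volume e _).symm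
  rw [hshift]
  refine vol_finite_diff (F := ⋃ i, Exc Γ r s (gl := gl) (c := c) i)
    (Set.finite_iUnion fun i => (exc_subsingleton Γ r s i).finite) ?_ ?_
  · rintro τ ⟨hτc, i, hfwd⟩
    by_cases hexc : τ ∈ Exc Γ r s (gl := gl) (c := c) i
    · exact Or.inr (mem_iUnion.mpr ⟨i, hexc⟩)
    · left
      have hmatch : Match Γ r s gl i τ := by
        obtain ⟨α, hα, hm, _⟩ := hfwd
        exact ⟨α, hα, hm⟩
      have : ¬ (∀ τ₂ ∈ Icc (0:ℝ) c, Match Γ r s gl i τ₂ → τ₂ = τ) := by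
        intro hall
        exact hexc ⟨hτc, hmatch, hall⟩
      push_neg at this
      obtain ⟨τ₂, hτ₂, hm₂, hne⟩ := this
      have hext := bwd_extend Γ r s he heD hgiso heq hτc hτ₂ hne hm₂ hfwd
      have h1 : e + τ ∈ Icc (0:ℝ) D := ⟨by linarith [hτc.1], by linarith [hτc.2]⟩
      have h2 : e + τ ∈ Icc e (e + c) := ⟨by linarith [hτc.1], by linarith [hτc.2]⟩
      show e + τ ∈ negSet Γ r s g D ∩ Icc e (e + c)
      exact ⟨⟨h1, i, hext⟩, h2⟩
  · intro τ hτ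
    have hτe : e + τ ∈ Icc e (e + c) := hτ.2
    have hmem : e + τ ∈ Icc (0:ℝ) D := hτ.1.1
    obtain ⟨i, hfwd⟩ := hτ.1.2
    left
    have hτc : τ ∈ Icc (0:ℝ) c := ⟨by linarith [hτe.1], by linarith [hτe.2]⟩
    exact ⟨hτc, i, bwd_restrict Γ r s he heD heq hτc hfwd⟩

end Transfer

end NAPot
end
noncomputable section
namespace NAPot
open Set MeasureTheory NABasic

variable {X : Type*} [MetricSpace X] {ι : Type*} [Fintype ι]
variable (Γ : ι → GeodesicLine X) (r s : ℝ)

lemma Fv_add (hgeo : IsGeodesicSpace X) (htree : IsZeroHyperbolic X) {w m w' : X}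
    (h : Btw w m w') :
    Fv Γ r s hgeo w w' = Fv Γ r s hgeo w m + Fv Γ r s hgeo m w' := by
  have hD : dist w m + dist m w' = dist w w' := h
  set D := dist w w' with hDdef
  set c := dist w m with hcdef
  have hc0 : (0:ℝ) ≤ c := dist_nonneg
  have hcD : c ≤ D := by
    have := dist_nonneg (x := m) (y := w')
    linarith
  have hd2 : dist m w' = D - c := by linarith
  have hmid : seg hgeo w w' c = m := by
    refine btw_unique htree (seg_btw hgeo w w' ⟨hc0, hcD⟩) h ?_
    rw [seg_dist_left hgeo w w' ⟨hc0, hcD⟩]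
  have hgiso := seg_dist hgeo w w'
  have heql : ∀ τ ∈ Icc (0:ℝ) c, seg hgeo w m τ = seg hgeo w w' (0 + τ) := by
    intro τ hτ
    rw [zero_add]
    refine arc_unique htree (seg_zero hgeo w m) (seg_last hgeo w m) (seg_dist hgeo w m)
      (seg_zero hgeo w w') (by rw [← hcdef, hmid]) ?_ hτ
    intro a ha b hb
    exact hgiso a ⟨ha.1, ha.2.trans hcD⟩ b ⟨hb.1, hb.2.trans hcD⟩
  have heqr : ∀ τ ∈ Icc (0:ℝ) (D - c), seg hgeo m w' τ = seg hgeo w w' (c + τ) := by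
    intro τ hτ
    have hτ' : τ ∈ Icc (0:ℝ) (dist m w') := by rw [hd2]; exact hτ
    refine arc_unique htree (g' := fun τ => seg hgeo w w' (c + τ)) (seg_zero hgeo m w')
      (seg_last hgeo m w') (seg_dist hgeo m w')
      (by show seg hgeo w w' (c + 0) = m; rw [add_zero]; exact hmid) ?_ ?_ hτ'
    · show seg hgeo w w' (c + dist m w') = w'
      rw [hd2]
      have : c + (D - c) = D := by ring
      rw [this, hDdef, seg_last]
    · intro a ha b hb
      rw [hd2] at ha hb
      have h1 : c + a ∈ Icc (0:ℝ) D := ⟨by linarith [ha.1], by linarith [ha.2]⟩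
      have h2 : c + b ∈ Icc (0:ℝ) D := ⟨by linarith [hb.1], by linarith [hb.2]⟩
      show dist (seg hgeo w w' (c + a)) (seg hgeo w w' (c + b)) = |a - b|
      rw [hgiso _ h1 _ h2]
      congr 1
      ring
  have hsplitP := vol_split (posSet_subset Γ r s (seg hgeo w w') D) hc0 hcD
  have hsplitN := vol_split (negSet_subset Γ r s (seg hgeo w w') D) hc0 hcD
  have hP1 := vol_piece_pos Γ r s (D := D) le_rfl hc0 (by linarith) hgiso heql
  simp only [zero_add] at hP1
  have hP2 := vol_piece_pos Γ r s (D := D) hc0 (by linarith : (0:ℝ) ≤ D - c)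
    (by linarith : c + (D - c) ≤ D) hgiso heqr
  have hcc : c + (D - c) = D := by ring
  rw [hcc] at hP2
  have hN1 := vol_piece_neg Γ r s (D := D) le_rfl hc0 (by linarith) hgiso heql
  simp only [zero_add] at hN1
  have hN2 := vol_piece_neg Γ r s (D := D) hc0 (by linarith : (0:ℝ) ≤ D - c)
    (by linarith : c + (D - c) ≤ D) hgiso heqr
  rw [hcc] at hN2
  have ht1 : volume (posSet Γ r s (seg hgeo w w') D ∩ Icc 0 c) ≠ ⊤ :=
    vol_ne_top (Set.inter_subset_left.trans (posSet_subset Γ r s _ D))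
  have ht2 : volume (posSet Γ r s (seg hgeo w w') D ∩ Icc c D) ≠ ⊤ :=
    vol_ne_top (Set.inter_subset_left.trans (posSet_subset Γ r s _ D))
  have ht3 : volume (negSet Γ r s (seg hgeo w w') D ∩ Icc 0 c) ≠ ⊤ :=
    vol_ne_top (Set.inter_subset_left.trans (negSet_subset Γ r s _ D))
  have ht4 : volume (negSet Γ r s (seg hgeo w w') D ∩ Icc c D) ≠ ⊤ :=
    vol_ne_top (Set.inter_subset_left.trans (negSet_subset Γ r s _ D))
  show (volume (posSet Γ r s (seg hgeo w w') D)).toReal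
      - (volume (negSet Γ r s (seg hgeo w w') D)).toReal
    = ((volume (posSet Γ r s (seg hgeo w m) (dist w m))).toReal
        - (volume (negSet Γ r s (seg hgeo w m) (dist w m))).toReal)
      + ((volume (posSet Γ r s (seg hgeo m w') (dist m w'))).toReal
        - (volume (negSet Γ r s (seg hgeo m w') (dist m w'))).toReal)
  rw [hsplitP, hsplitN, ENNReal.toReal_add ht1 ht2, ENNReal.toReal_add ht3 ht4,
    ← hcdef, hd2, hP1, hP2, hN1, hN2]
  ring

lemma Fv_own (hgeo : IsGeodesicSpace X) (htree : IsZeroHyperbolic X)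
    (hna : ∀ i j, ¬ Antagonist (Γ i) (Γ j)) (i : ι) {a b : ℝ}
    (hra : r ≤ a) (hab : a ≤ b) (hbs : b ≤ s) :
    Fv Γ r s hgeo ((Γ i).1 a) ((Γ i).1 b) = b - a := by
  set p := (Γ i).1 a with hp
  set q := (Γ i).1 b with hq
  have hdist : dist p q = b - a := by
    rw [hp, hq, line_dist, abs_of_nonpos (by linarith)]; ring
  set D := dist p q with hD
  have hD' : D = b - a := hdist
  have hDnn : (0:ℝ) ≤ D := dist_nonneg
  have hgiso := seg_dist hgeo p q
  have heq : ∀ τ ∈ Icc (0:ℝ) D, seg hgeo p q τ = (Γ i).1 (a + τ) := by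
    intro τ hτ
    refine arc_unique htree (g' := fun τ => (Γ i).1 (a + τ)) (seg_zero hgeo p q)
      (seg_last hgeo p q) (seg_dist hgeo p q)
      (by show (Γ i).1 (a + 0) = p; rw [add_zero, hp]) ?_ ?_ hτ
    · show (Γ i).1 (a + dist p q) = q
      rw [← hD, hD']
      have : a + (b - a) = b := by ring
      rw [this, hq]
    · intro x hx y hy
      show dist ((Γ i).1 (a + x)) ((Γ i).1 (a + y)) = |x - y|
      rw [line_dist]
      congr 1
      ring
  -- every point of the arc is forward via i
  have hpos : Icc (0:ℝ) D ⊆ posSet Γ r s (seg hgeo p q) D := by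
    intro τ hτ
    refine ⟨hτ, i, a + τ, ⟨by linarith [hτ.1], by linarith [hτ.2, hD'.le]⟩,
      (heq τ hτ).symm, ?_⟩
    · intro τ' hτ' α' hα' hm'
      rw [heq τ' hτ'] at hm'
      have := line_inj (Γ i) hm'
      linarith [this]
  have hposvol : volume (posSet Γ r s (seg hgeo p q) D) = ENNReal.ofReal D := by
    apply le_antisymm
    · have := measure_mono (μ := volume) (posSet_subset Γ r s (seg hgeo p q) D)
      rwa [Real.volume_Icc, sub_zero] at this
    · have := measure_mono (μ := volume) hpos
      rwa [Real.volume_Icc, sub_zero] at this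
  -- the backward set is finite
  have hnegsub : negSet Γ r s (seg hgeo p q) D ⊆
      ⋃ j, {τ | τ ∈ Icc (0:ℝ) D ∧ Bwd Γ r s (seg hgeo p q) D j τ} := by
    rintro τ ⟨hτ, j, hbwd⟩
    exact mem_iUnion.mpr ⟨j, hτ, hbwd⟩
  have hsub : ∀ j, {τ | τ ∈ Icc (0:ℝ) D ∧ Bwd Γ r s (seg hgeo p q) D j τ}.Subsingleton := by
    intro j τ₁ h₁ τ₂ h₂
    by_contra hne
    -- wlog τ₁ < τ₂
    rcases lt_trichotomy τ₁ τ₂ with hlt | heqq | hlt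
    · obtain ⟨α₁, hα₁, hm₁, hcond₁⟩ := h₁.2
      obtain ⟨α₂, hα₂, hm₂, _⟩ := h₂.2
      have hα : α₂ - α₁ = -(τ₂ - τ₁) := hcond₁ τ₂ h₂.1 α₂ hα₂ hm₂
      refine hna i j ⟨seg hgeo p q τ₁, seg hgeo p q τ₂, ?_, a + τ₁, a + τ₂, α₂, α₁,
        by linarith, by linarith, (heq τ₁ h₁.1).symm, (heq τ₂ h₂.1).symm, hm₂, hm₁⟩
      intro hcon
      have hd := hgiso τ₁ h₁.1 τ₂ h₂.1
      rw [hcon, dist_self] at hd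
      have h0 : τ₁ - τ₂ = 0 := abs_eq_zero.mp hd.symm
      linarith
    · exact hne heqq
    · obtain ⟨α₂, hα₂, hm₂, hcond₂⟩ := h₂.2
      obtain ⟨α₁, hα₁, hm₁, _⟩ := h₁.2
      have hα : α₁ - α₂ = -(τ₁ - τ₂) := hcond₂ τ₁ h₁.1 α₁ hα₁ hm₁
      refine hna i j ⟨seg hgeo p q τ₂, seg hgeo p q τ₁, ?_, a + τ₂, a + τ₁, α₁, α₂,
        by linarith, by linarith, (heq τ₂ h₂.1).symm, (heq τ₁ h₁.1).symm, hm₁, hm₂⟩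
      intro hcon
      have hd := hgiso τ₂ h₂.1 τ₁ h₁.1
      rw [hcon, dist_self] at hd
      have h0 : τ₂ - τ₁ = 0 := abs_eq_zero.mp hd.symm
      linarith
  have hnegvol : volume (negSet Γ r s (seg hgeo p q) D) = 0 := by
    refine measure_mono_null hnegsub ?_
    exact (Set.finite_iUnion fun j => (hsub j).finite).measure_zero _
  show (volume (posSet Γ r s (seg hgeo p q) D)).toReal
      - (volume (negSet Γ r s (seg hgeo p q) D)).toReal = b - a
  rw [hposvol, hnegvol, ENNReal.toReal_ofReal hDnn, ENNReal.toReal_zero, hD']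
  ring

lemma Fv_own_rev (hgeo : IsGeodesicSpace X) (htree : IsZeroHyperbolic X)
    (hna : ∀ i j, ¬ Antagonist (Γ i) (Γ j)) (i : ι) {a b : ℝ}
    (hra : r ≤ a) (hab : a ≤ b) (hbs : b ≤ s) :
    Fv Γ r s hgeo ((Γ i).1 b) ((Γ i).1 a) = a - b := by
  set p := (Γ i).1 b with hp
  set q := (Γ i).1 a with hq
  have hdist : dist p q = b - a := by
    rw [hp, hq, line_dist, abs_of_nonneg (by linarith)]
  set D := dist p q with hD
  have hD' : D = b - a := hdist
  have hDnn : (0:ℝ) ≤ D := dist_nonneg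
  have hgiso := seg_dist hgeo p q
  have heq : ∀ τ ∈ Icc (0:ℝ) D, seg hgeo p q τ = (Γ i).1 (b - τ) := by
    intro τ hτ
    refine arc_unique htree (g' := fun τ => (Γ i).1 (b - τ)) (seg_zero hgeo p q)
      (seg_last hgeo p q) (seg_dist hgeo p q)
      (by show (Γ i).1 (b - 0) = p; rw [sub_zero, hp]) ?_ ?_ hτ
    · show (Γ i).1 (b - dist p q) = q
      rw [← hD, hD']
      have : b - (b - a) = a := by ring
      rw [this, hq]
    · intro x hx y hy
      show dist ((Γ i).1 (b - x)) ((Γ i).1 (b - y)) = |x - y|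
      rw [line_dist]
      rw [show b - x - (b - y) = -(x - y) by ring, abs_neg]
  have hneg : Icc (0:ℝ) D ⊆ negSet Γ r s (seg hgeo p q) D := by
    intro τ hτ
    refine ⟨hτ, i, b - τ, ⟨by linarith [hτ.2, hD'.le], by linarith [hτ.1]⟩,
      (heq τ hτ).symm, ?_⟩
    · intro τ' hτ' α' hα' hm'
      rw [heq τ' hτ'] at hm'
      have := line_inj (Γ i) hm'
      linarith [this]
  have hnegvol : volume (negSet Γ r s (seg hgeo p q) D) = ENNReal.ofReal D := by
    apply le_antisymm
    · have := measure_mono (μ := volume) (negSet_subset Γ r s (seg hgeo p q) D)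
      rwa [Real.volume_Icc, sub_zero] at this
    · have := measure_mono (μ := volume) hneg
      rwa [Real.volume_Icc, sub_zero] at this
  have hpossub : posSet Γ r s (seg hgeo p q) D ⊆
      ⋃ j, {τ | τ ∈ Icc (0:ℝ) D ∧ Fwd Γ r s (seg hgeo p q) D j τ} := by
    rintro τ ⟨hτ, j, hfwd⟩
    exact mem_iUnion.mpr ⟨j, hτ, hfwd⟩
  have hsub : ∀ j, {τ | τ ∈ Icc (0:ℝ) D ∧ Fwd Γ r s (seg hgeo p q) D j τ}.Subsingleton := by
    intro j τ₁ h₁ τ₂ h₂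
    by_contra hne
    rcases lt_trichotomy τ₁ τ₂ with hlt | heqq | hlt
    · obtain ⟨α₁, hα₁, hm₁, hcond₁⟩ := h₁.2
      obtain ⟨α₂, hα₂, hm₂, _⟩ := h₂.2
      have hα : α₂ - α₁ = τ₂ - τ₁ := hcond₁ τ₂ h₂.1 α₂ hα₂ hm₂
      -- Γ j passes through (seg τ₁) then (seg τ₂); Γ i passes (seg τ₂) at b - τ₂ then (seg τ₁)
      refine hna j i ⟨seg hgeo p q τ₁, seg hgeo p q τ₂, ?_, α₁, α₂, b - τ₂, b - τ₁,
        by linarith, by linarith, hm₁, hm₂, (heq τ₂ h₂.1).symm, (heq τ₁ h₁.1).symm⟩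
      intro hcon
      have hd := hgiso τ₁ h₁.1 τ₂ h₂.1
      rw [hcon, dist_self] at hd
      have h0 : τ₁ - τ₂ = 0 := abs_eq_zero.mp hd.symm
      linarith
    · exact hne heqq
    · obtain ⟨α₂, hα₂, hm₂, hcond₂⟩ := h₂.2
      obtain ⟨α₁, hα₁, hm₁, _⟩ := h₁.2
      have hα : α₁ - α₂ = τ₁ - τ₂ := hcond₂ τ₁ h₁.1 α₁ hα₁ hm₁
      refine hna j i ⟨seg hgeo p q τ₂, seg hgeo p q τ₁, ?_, α₂, α₁, b - τ₁, b - τ₂,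
        by linarith, by linarith, hm₂, hm₁, (heq τ₁ h₁.1).symm, (heq τ₂ h₂.1).symm⟩
      intro hcon
      have hd := hgiso τ₂ h₂.1 τ₁ h₁.1
      rw [hcon, dist_self] at hd
      have h0 : τ₂ - τ₁ = 0 := abs_eq_zero.mp hd.symm
      linarith
  have hposvol : volume (posSet Γ r s (seg hgeo p q) D) = 0 := by
    refine measure_mono_null hpossub ?_
    exact (Set.finite_iUnion fun j => (hsub j).finite).measure_zero _
  show (volume (posSet Γ r s (seg hgeo p q) D)).toReal
      - (volume (negSet Γ r s (seg hgeo p q) D)).toReal = a - b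
  rw [hposvol, hnegvol, ENNReal.toReal_ofReal hDnn, ENNReal.toReal_zero, hD']
  ring

/-- The fundamental cycle inequality. -/
theorem sum_dist_ge (hgeo : IsGeodesicSpace X) (htree : IsZeroHyperbolic X)
    (hna : ∀ i j, ¬ Antagonist (Γ i) (Γ j)) (hrs : r ≤ s) (σ : Equiv.Perm ι) :
    (Fintype.card ι : ℝ) * (s - r) ≤ ∑ i, dist ((Γ i).1 r) ((Γ (σ i)).1 s) := by
  rcases isEmpty_or_nonempty ι with hι | hι
  · simp
  obtain ⟨i₀⟩ := hι
  set z₀ := (Γ i₀).1 r with hz₀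
  set f : X → ℝ := fun z => Fv Γ r s hgeo z₀ z with hf
  have key1 : ∀ i j : ι, f ((Γ j).1 s) - f ((Γ i).1 r) ≤ dist ((Γ i).1 r) ((Γ j).1 s) := by
    intro i j
    obtain ⟨m, hm1, hm2, hm3⟩ := median hgeo htree z₀ ((Γ i).1 r) ((Γ j).1 s)
    have e1 : f ((Γ j).1 s) = Fv Γ r s hgeo z₀ m + Fv Γ r s hgeo m ((Γ j).1 s) :=
      Fv_add Γ r s hgeo htree hm2
    have e2 : f ((Γ i).1 r) = Fv Γ r s hgeo z₀ m + Fv Γ r s hgeo m ((Γ i).1 r) :=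
      Fv_add Γ r s hgeo htree hm1
    have b1 := Fv_abs_le Γ r s hgeo m ((Γ j).1 s)
    have b2 := Fv_abs_le Γ r s hgeo m ((Γ i).1 r)
    have hbtw : dist ((Γ i).1 r) m + dist m ((Γ j).1 s) = dist ((Γ i).1 r) ((Γ j).1 s) := hm3
    rw [e1, e2]
    have a1 := abs_le.mp b1
    have a2 := abs_le.mp b2
    rw [dist_comm ((Γ i).1 r) m] at hbtw
    linarith [a1.2, a2.1, a2.2]
  have key2 : ∀ i : ι, f ((Γ i).1 s) - f ((Γ i).1 r) = s - r := by
    intro i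
    obtain ⟨m, hm1, hm2, hm3⟩ := median hgeo htree z₀ ((Γ i).1 r) ((Γ i).1 s)
    set h := dist ((Γ i).1 r) m with hh
    have hdrs : dist ((Γ i).1 r) ((Γ i).1 s) = s - r := by
      rw [line_dist, abs_of_nonpos (by linarith)]; ring
    have hhge : 0 ≤ h := dist_nonneg
    have hhle : h ≤ s - r := by
      have : h + dist m ((Γ i).1 s) = s - r := by rw [← hdrs]; exact hm3
      have := dist_nonneg (x := m) (y := (Γ i).1 s)
      linarith
    have hmeq : m = (Γ i).1 (r + h) := by
      refine btw_unique htree (x := (Γ i).1 r) (y := (Γ i).1 s) hm3 ?_ ?_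
      · show dist ((Γ i).1 r) ((Γ i).1 (r + h)) + dist ((Γ i).1 (r + h)) ((Γ i).1 s)
          = dist ((Γ i).1 r) ((Γ i).1 s)
        rw [line_dist, line_dist, hdrs, abs_of_nonpos (by linarith), abs_of_nonpos (by linarith)]
        ring
      · rw [← hh, line_dist, abs_of_nonpos (by linarith)]; ring
    have e1 : f ((Γ i).1 s) = Fv Γ r s hgeo z₀ m + Fv Γ r s hgeo m ((Γ i).1 s) :=
      Fv_add Γ r s hgeo htree hm2
    have e2 : f ((Γ i).1 r) = Fv Γ r s hgeo z₀ m + Fv Γ r s hgeo m ((Γ i).1 r) :=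
      Fv_add Γ r s hgeo htree hm1
    have v1 : Fv Γ r s hgeo m ((Γ i).1 s) = s - (r + h) := by
      rw [hmeq]
      exact Fv_own Γ r s hgeo htree hna i (by linarith) (by linarith) le_rfl
    have v2 : Fv Γ r s hgeo m ((Γ i).1 r) = r - (r + h) := by
      rw [hmeq]
      exact Fv_own_rev Γ r s hgeo htree hna i le_rfl (by linarith) (by linarith)
    rw [e1, e2, v1, v2]
    ring
  have hsum : ∑ i, (f ((Γ (σ i)).1 s) - f ((Γ i).1 r)) = (Fintype.card ι : ℝ) * (s - r) := by
    rw [Finset.sum_sub_distrib]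
    have hre : ∑ i, f ((Γ (σ i)).1 s) = ∑ i, f ((Γ i).1 s) :=
      Equiv.sum_comp σ (fun i => f ((Γ i).1 s))
    rw [hre, ← Finset.sum_sub_distrib]
    rw [Finset.sum_congr rfl (fun i _ => key2 i)]
    rw [Finset.sum_const, Finset.card_univ, nsmul_eq_mul]
  calc (Fintype.card ι : ℝ) * (s - r) = ∑ i, (f ((Γ (σ i)).1 s) - f ((Γ i).1 r)) := hsum.symm
    _ ≤ ∑ i, dist ((Γ i).1 r) ((Γ (σ i)).1 s) := Finset.sum_le_sum fun i _ => key1 i (σ i)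

/-- Squared version via Cauchy–Schwarz. -/
theorem sum_distsq_ge (hgeo : IsGeodesicSpace X) (htree : IsZeroHyperbolic X)
    (hna : ∀ i j, ¬ Antagonist (Γ i) (Γ j)) (hrs : r ≤ s) (σ : Equiv.Perm ι) :
    (Fintype.card ι : ℝ) * (s - r) ^ 2 ≤ ∑ i, dist ((Γ i).1 r) ((Γ (σ i)).1 s) ^ 2 := by
  rcases Nat.eq_zero_or_pos (Fintype.card ι) with hn | hn
  · simp only [hn, Nat.cast_zero, zero_mul]
    exact Finset.sum_nonneg fun i _ => sq_nonneg _
  have hn' : (0:ℝ) < (Fintype.card ι : ℝ) := by exact_mod_cast hn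
  have hcs := Finset.sum_mul_sq_le_sq_mul_sq Finset.univ
    (fun i => dist ((Γ i).1 r) ((Γ (σ i)).1 s)) (fun _ => (1:ℝ))
  simp only [mul_one, one_pow, Finset.sum_const, Finset.card_univ, nsmul_eq_mul] at hcs
  have h1 := sum_dist_ge Γ r s hgeo htree hna hrs σ
  have h2 : ((Fintype.card ι : ℝ) * (s - r)) ^ 2
      ≤ (∑ i, dist ((Γ i).1 r) ((Γ (σ i)).1 s)) ^ 2 := by
    have hnn : 0 ≤ (Fintype.card ι : ℝ) * (s - r) := by
      apply mul_nonneg hn'.le; linarith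
    exact pow_le_pow_left₀ hnn h1 2
  have h3 : ((Fintype.card ι : ℝ) * (s - r)) ^ 2
      ≤ (∑ i, dist ((Γ i).1 r) ((Γ (σ i)).1 s) ^ 2) * (Fintype.card ι : ℝ) := h2.trans hcs
  nlinarith [h3, sq_nonneg (s - r)]

end NAPot
end
noncomputable section
namespace NAMeas
open Set MeasureTheory NABasic

lemma msupport_compl_open {T : Type*} [TopologicalSpace T] [MeasurableSpace T]
    (ν : Measure T) : IsOpen (msupport ν)ᶜ := by
  refine isOpen_iff_forall_mem_open.mpr ?_
  intro y hy
  simp only [mem_compl_iff, msupport, mem_setOf_eq, not_forall] at hy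
  obtain ⟨U, hU, hyU, hnull⟩ := hy
  push_neg at hnull
  refine ⟨U, ?_, hU, hyU⟩
  intro z hz
  simp only [mem_compl_iff, msupport, mem_setOf_eq, not_forall]
  exact ⟨U, hU, hz, by simpa using hnull⟩

lemma msupport_compl_null {T : Type*} [TopologicalSpace T] [MeasurableSpace T]
    [OpensMeasurableSpace T] [SecondCountableTopology T] (ν : Measure T) :
    ν (msupport ν)ᶜ = 0 := by
  have hcompl : (msupport ν)ᶜ = ⋃₀ {U : Set T | IsOpen U ∧ ν U = 0} := by
    ext y
    simp only [mem_compl_iff, msupport, mem_setOf_eq, not_forall, mem_sUnion]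
    constructor
    · rintro ⟨U, hU, hyU, hnull⟩
      push_neg at hnull
      exact ⟨U, ⟨hU, hnull⟩, hyU⟩
    · rintro ⟨U, ⟨hU, hnull⟩, hyU⟩
      exact ⟨U, hU, hyU, by simp [hnull]⟩
  obtain ⟨T', hT'c, hT'sub, hT'eq⟩ := TopologicalSpace.isOpen_sUnion_countable
    {U : Set T | IsOpen U ∧ ν U = 0} (fun U hU => hU.1)
  rw [hcompl, ← hT'eq]
  rw [measure_sUnion_null_iff hT'c]
  exact fun U hU => (hT'sub hU).2

variable {X : Type*} [MetricSpace X] [MeasurableSpace X] [BorelSpace X]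

lemma continuous_eval (t : ℝ) : Continuous (eval t : GeodesicLine X → X) :=
  (continuous_apply t).comp continuous_subtype_val

lemma measurable_eval (t : ℝ) : Measurable (eval t : GeodesicLine X → X) :=
  (continuous_eval t).measurable

lemma measurable_pair (r s : ℝ) :
    Measurable (fun γ : GeodesicLine X => (eval r γ, eval s γ)) :=
  (measurable_eval r).prodMk (measurable_eval s)

/-- The joint selection lemma: from finitely many non-null measurable sets one can
pick representatives pairwise avoiding a null set of pairs. -/
lemma selection (μ : Measure (GeodesicLine X)) [IsProbabilityMeasure μ]
    {W' : Set (GeodesicLine X × GeodesicLine X)} (hW'm : MeasurableSet W')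
    (hW'0 : (μ.prod μ) W' = 0) :
    ∀ (n : ℕ) (A : Fin n → Set (GeodesicLine X)), (∀ i, MeasurableSet (A i)) →
      (∀ i, μ (A i) ≠ 0) →
      ∃ g : Fin n → GeodesicLine X, (∀ i, g i ∈ A i) ∧
        (∀ i, μ (Prod.mk (g i) ⁻¹' W') = 0 ∧ μ ((fun β => (β, g i)) ⁻¹' W') = 0) ∧
        (∀ i j, i ≠ j → (g i, g j) ∉ W') := by
  -- the ae-good set
  have hsec1 : ∀ᵐ γ ∂μ, μ (Prod.mk γ ⁻¹' W') = 0 := by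
    have := (Measure.measure_prod_null hW'm).mp hW'0
    filter_upwards [this] with γ hγ using hγ
  have hswap : (μ.prod μ) (Prod.swap ⁻¹' W') = 0 := by
    have hmap : (μ.prod μ).map Prod.swap = μ.prod μ := Measure.prod_swap
    have := Measure.map_apply (f := Prod.swap) measurable_swap hW'm
      (μ := μ.prod μ)
    rw [hmap] at this
    rw [this] at hW'0
    exact hW'0
  have hsec2 : ∀ᵐ γ ∂μ, μ (Prod.mk γ ⁻¹' (Prod.swap ⁻¹' W')) = 0 := by
    have := (Measure.measure_prod_null (measurable_swap hW'm)).mp hswap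
    filter_upwards [this] with γ hγ using hγ
  have hsec2' : ∀ᵐ γ ∂μ, μ ((fun β => (β, γ)) ⁻¹' W') = 0 := by
    filter_upwards [hsec2] with γ hγ
    have : (Prod.mk γ ⁻¹' (Prod.swap ⁻¹' W')) = ((fun β => (β, γ)) ⁻¹' W') := by
      ext β; simp [Prod.swap]
    rwa [this] at hγ
  have hgood : ∀ᵐ γ ∂μ, μ (Prod.mk γ ⁻¹' W') = 0 ∧ μ ((fun β => (β, γ)) ⁻¹' W') = 0 :=
    hsec1.and hsec2'
  set N : Set (GeodesicLine X) :=
    {γ | ¬ (μ (Prod.mk γ ⁻¹' W') = 0 ∧ μ ((fun β => (β, γ)) ⁻¹' W') = 0)} with hN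
  have hNnull : μ N = 0 := hgood
  intro n
  induction n with
  | zero =>
    intro A _ _
    exact ⟨fun i => i.elim0, fun i => i.elim0, fun i => i.elim0, fun i => i.elim0⟩
  | succ n ih =>
    intro A hAm hA0
    obtain ⟨g, hg1, hg2, hg3⟩ := ih (fun i => A i.castSucc) (fun i => hAm _) (fun i => hA0 _)
    -- bad set for the new choice
    set Bad : Set (GeodesicLine X) :=
      N ∪ ⋃ i : Fin n, (Prod.mk (g i) ⁻¹' W' ∪ (fun β => (β, g i)) ⁻¹' W') with hBad
    have hBadnull : μ Bad = 0 := by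
      rw [hBad]
      refine measure_union_null hNnull ?_
      refine measure_iUnion_null fun i => measure_union_null (hg2 i).1 (hg2 i).2
    have hApos : μ (A (Fin.last n) \ Bad) ≠ 0 := by
      rw [measure_diff_null hBadnull]
      exact hA0 _
    obtain ⟨γnew, hγnew⟩ := nonempty_of_measure_ne_zero hApos
    refine ⟨Fin.snoc g γnew, ?_, ?_, ?_⟩
    · intro i
      rcases Fin.eq_castSucc_or_eq_last i with ⟨i', rfl⟩ | rfl
      · rw [Fin.snoc_castSucc]; exact hg1 i'
      · rw [Fin.snoc_last]; exact hγnew.1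
    · intro i
      rcases Fin.eq_castSucc_or_eq_last i with ⟨i', rfl⟩ | rfl
      · rw [Fin.snoc_castSucc]; exact hg2 i'
      · rw [Fin.snoc_last]
        have hnn : γnew ∉ N := fun hc => hγnew.2 (Or.inl hc)
        rw [hN] at hnn
        simp only [mem_setOf_eq, not_not] at hnn
        exact hnn
    · intro i j hij
      rcases Fin.eq_castSucc_or_eq_last i with ⟨i', rfl⟩ | rfl <;>
        rcases Fin.eq_castSucc_or_eq_last j with ⟨j', rfl⟩ | rfl
      · rw [Fin.snoc_castSucc, Fin.snoc_castSucc]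
        exact hg3 i' j' (fun hc => hij (by rw [hc]))
      · rw [Fin.snoc_castSucc, Fin.snoc_last]
        intro hc
        exact hγnew.2 (Or.inr (mem_iUnion.mpr ⟨i', Or.inl hc⟩))
      · rw [Fin.snoc_last, Fin.snoc_castSucc]
        intro hc
        exact hγnew.2 (Or.inr (mem_iUnion.mpr ⟨j', Or.inr hc⟩))
      · exact absurd rfl hij

end NAMeas
end
noncomputable section
namespace NAFinal
open Set MeasureTheory NABasic Metric

variable {X : Type*} [MetricSpace X] [MeasurableSpace X] [BorelSpace X]

theorem dir_mono (hgeo : IsGeodesicSpace X) (htree : IsZeroHyperbolic X)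
    (μ : Measure (GeodesicLine X)) [IsProbabilityMeasure μ]
    (hW : (μ.prod μ) {p : GeodesicLine X × GeodesicLine X | Antagonist p.1 p.2} = 0)
    (r s : ℝ) (hrs : r < s) :
    CyclicallyMonotone (fun a b : X => dist a b ^ 2)
      (msupport (μ.map (fun γ => (eval r γ, eval s γ)))) := by
  intro n p hp σ
  obtain ⟨W', hWW', hW'm, hW'0⟩ := exists_measurable_superset_of_null hW
  set π := μ.map (fun γ : GeodesicLine X => (eval r γ, eval s γ)) with hπ
  set M : ℝ := (∑ i, ∑ j, dist ((p i).1) ((p j).2)) + (s - r) + 4 with hM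
  have hsums : ∀ i j : Fin n, dist ((p i).1) ((p j).2) ≤ ∑ i, ∑ j, dist ((p i).1) ((p j).2) := by
    intro i j
    calc dist ((p i).1) ((p j).2) ≤ ∑ j', dist ((p i).1) ((p j').2) :=
        Finset.single_le_sum (f := fun j' => dist ((p i).1) ((p j').2))
          (fun _ _ => dist_nonneg) (Finset.mem_univ j)
      _ ≤ ∑ i', ∑ j', dist ((p i').1) ((p j').2) :=
        Finset.single_le_sum (f := fun i' => ∑ j', dist ((p i').1) ((p j').2))
          (fun _ _ => Finset.sum_nonneg fun _ _ => dist_nonneg) (Finset.mem_univ i)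
  have hMd : ∀ i j, dist ((p i).1) ((p j).2) ≤ M := by
    intro i j
    have := hsums i j
    rw [hM]; linarith [hrs.le]
  have hMsr : s - r ≤ M := by
    rw [hM]
    have : (0:ℝ) ≤ ∑ i, ∑ j, dist ((p i).1) ((p j).2) :=
      Finset.sum_nonneg fun i _ => Finset.sum_nonneg fun j _ => dist_nonneg
    linarith
  have hM0 : (0:ℝ) < M := by
    rw [hM]
    have : (0:ℝ) ≤ ∑ i, ∑ j, dist ((p i).1) ((p j).2) :=
      Finset.sum_nonneg fun i _ => Finset.sum_nonneg fun j _ => dist_nonneg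
    linarith [hrs.le]
  have key : ∀ ε : ℝ, 0 < ε → ε ≤ 1 →
      ∑ i, dist ((p i).1) ((p i).2) ^ 2
        ≤ ∑ i, dist ((p i).1) ((p (σ i)).2) ^ 2 + (n : ℝ) * (8 * M + 8) * ε := by
    intro ε hε hε1
    set A : Fin n → Set (GeodesicLine X) := fun i =>
      (fun γ : GeodesicLine X => (eval r γ, eval s γ)) ⁻¹'
        (Metric.ball (p i).1 ε ×ˢ Metric.ball (p i).2 ε) with hA
    have hAm : ∀ i, MeasurableSet (A i) := fun i =>
      (NAMeas.measurable_pair r s) (measurableSet_ball.prod measurableSet_ball)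
    have hA0 : ∀ i, μ (A i) ≠ 0 := by
      intro i
      have hopen : IsOpen (Metric.ball (p i).1 ε ×ˢ Metric.ball (p i).2 ε) :=
        isOpen_ball.prod isOpen_ball
      have hmem : p i ∈ Metric.ball (p i).1 ε ×ˢ Metric.ball (p i).2 ε :=
        ⟨mem_ball_self hε, mem_ball_self hε⟩
      have hne := hp i _ hopen hmem
      rw [hπ, Measure.map_apply (NAMeas.measurable_pair r s)
        (measurableSet_ball.prod measurableSet_ball)] at hne
      exact hne
    obtain ⟨g, hg1, _, hg3⟩ := NAMeas.selection μ hW'm hW'0 n A hAm hA0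
    have hna : ∀ i j, ¬ Antagonist (g i) (g j) := by
      intro i j
      by_cases hij : i = j
      · rw [hij]; exact not_antagonist_self _
      · intro hc
        exact (hg3 i j hij) (hWW' hc)
    have hcyc := NAPot.sum_distsq_ge g r s hgeo htree hna hrs.le σ
    rw [Fintype.card_fin] at hcyc
    have happr : ∀ i : Fin n,
        dist ((g i).1 r) ((p i).1) < ε ∧ dist ((g i).1 s) ((p i).2) < ε := by
      intro i
      have := hg1 i
      rw [hA] at this
      exact ⟨mem_ball.mp this.1, mem_ball.mp this.2⟩
    have hgd : ∀ i : Fin n, dist ((g i).1 r) ((g i).1 s) = s - r := by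
      intro i
      rw [line_dist, abs_of_nonpos (by linarith)]; ring
    have t1 : ∀ i : Fin n,
        dist ((p i).1) ((p i).2) ^ 2 ≤ (s - r) ^ 2 + (4 * M + 4) * ε := by
      intro i
      have h1 : dist ((p i).1) ((p i).2)
          ≤ dist ((g i).1 r) ((g i).1 s) + 2 * ε := by
        have c1 := dist_triangle ((p i).1) ((g i).1 r) ((p i).2)
        have c2 := dist_triangle ((g i).1 r) ((g i).1 s) ((p i).2)
        have c3 := (happr i).1
        have c4 := (happr i).2
        rw [dist_comm ((p i).1) ((g i).1 r)] at c1
        linarith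
      rw [hgd i] at h1
      have h2 : dist ((p i).1) ((p i).2) ^ 2 ≤ ((s - r) + 2 * ε) ^ 2 :=
        pow_le_pow_left₀ dist_nonneg h1 2
      nlinarith [hMsr, hε.le, hε1]
    have t2 : ∀ i : Fin n, dist ((g i).1 r) ((g (σ i)).1 s) ^ 2
        ≤ dist ((p i).1) ((p (σ i)).2) ^ 2 + (4 * M + 4) * ε := by
      intro i
      have h1 : dist ((g i).1 r) ((g (σ i)).1 s)
          ≤ dist ((p i).1) ((p (σ i)).2) + 2 * ε := by
        have c1 := dist_triangle ((g i).1 r) ((p i).1) ((g (σ i)).1 s)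
        have c2 := dist_triangle ((p i).1) ((p (σ i)).2) ((g (σ i)).1 s)
        have c3 := (happr i).1
        have c4 := (happr (σ i)).2
        rw [dist_comm ((p (σ i)).2) ((g (σ i)).1 s)] at c2
        linarith
      have h2 : dist ((g i).1 r) ((g (σ i)).1 s) ^ 2
          ≤ (dist ((p i).1) ((p (σ i)).2) + 2 * ε) ^ 2 :=
        pow_le_pow_left₀ dist_nonneg h1 2
      nlinarith [hMd i (σ i), hε.le, hε1, dist_nonneg (x := (p i).1) (y := (p (σ i)).2)]
    calc ∑ i, dist ((p i).1) ((p i).2) ^ 2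
        ≤ ∑ i : Fin n, ((s - r) ^ 2 + (4 * M + 4) * ε) := Finset.sum_le_sum fun i _ => t1 i
      _ = (n : ℝ) * (s - r) ^ 2 + (n : ℝ) * ((4 * M + 4) * ε) := by
          rw [Finset.sum_const, Finset.card_univ, Fintype.card_fin, nsmul_eq_mul]; ring
      _ ≤ (∑ i, dist ((g i).1 r) ((g (σ i)).1 s) ^ 2) + (n : ℝ) * ((4 * M + 4) * ε) := by
          linarith [hcyc]
      _ ≤ (∑ i, (dist ((p i).1) ((p (σ i)).2) ^ 2 + (4 * M + 4) * ε))
            + (n : ℝ) * ((4 * M + 4) * ε) := by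
          have := Finset.sum_le_sum fun i (_ : i ∈ Finset.univ) => t2 i
          linarith
      _ = ∑ i, dist ((p i).1) ((p (σ i)).2) ^ 2 + (n : ℝ) * (8 * M + 8) * ε := by
          rw [Finset.sum_add_distrib, Finset.sum_const, Finset.card_univ, Fintype.card_fin,
            nsmul_eq_mul]
          ring
  refine le_of_forall_pos_le_add ?_
  intro δ hδ
  set C : ℝ := (n : ℝ) * (8 * M + 8) with hC
  have hC0 : 0 ≤ C := by
    rw [hC]
    apply mul_nonneg (Nat.cast_nonneg n)
    linarith
  set ε : ℝ := min 1 (δ / (C + 1)) with hε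
  have hεpos : 0 < ε := lt_min one_pos (div_pos hδ (by linarith))
  have hε1 : ε ≤ 1 := min_le_left _ _
  have hCε : C * ε ≤ δ := by
    have h1 : ε ≤ δ / (C + 1) := min_le_right _ _
    have h2 : C * ε ≤ C * (δ / (C + 1)) := mul_le_mul_of_nonneg_left h1 hC0
    have h3 : C * (δ / (C + 1)) ≤ δ := by
      rw [mul_div_assoc']
      rw [div_le_iff₀ (by linarith : (0:ℝ) < C + 1)]
      nlinarith
    linarith
  have := key ε hεpos hε1
  calc ∑ i, dist ((p i).1) ((p i).2) ^ 2
      ≤ ∑ i, dist ((p i).1) ((p (σ i)).2) ^ 2 + C * ε := this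
    _ ≤ ∑ i, dist ((p i).1) ((p (σ i)).2) ^ 2 + δ := by linarith

end NAFinal
end
noncomputable section
namespace NAFinal2
open Set MeasureTheory NABasic Metric

variable {X : Type*} [MetricSpace X] [CompleteSpace X] [LocallyCompactSpace X]
  [MeasurableSpace X] [BorelSpace X]

theorem dir_anta (hgeo : IsGeodesicSpace X) (htree : IsZeroHyperbolic X)
    (μ : Measure (GeodesicLine X)) [IsProbabilityMeasure μ]
    (hcm : ∀ r s : ℝ, r < s →
        CyclicallyMonotone (fun a b : X => dist a b ^ 2)
          (msupport (μ.map (fun γ => (eval r γ, eval s γ))))) :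
    (μ.prod μ) {p : GeodesicLine X × GeodesicLine X | Antagonist p.1 p.2} = 0 := by
  haveI : ProperSpace X := NAProper.properSpace_of_geodesic hgeo
  set N : Set (GeodesicLine X) := ⋃ q : ℚ × ℚ,
    (fun γ : GeodesicLine X => (eval (q.1 : ℝ) γ, eval (q.2 : ℝ) γ)) ⁻¹'
      (msupport (μ.map (fun γ : GeodesicLine X =>
        (eval (q.1 : ℝ) γ, eval (q.2 : ℝ) γ))))ᶜ with hN
  have hNm : MeasurableSet N := by
    refine MeasurableSet.iUnion fun q => ?_
    exact (NAMeas.measurable_pair _ _) (NAMeas.msupport_compl_open _).measurableSet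
  have hNnull : μ N = 0 := by
    refine measure_iUnion_null fun q => ?_
    rw [← Measure.map_apply (NAMeas.measurable_pair _ _)
      (NAMeas.msupport_compl_open _).measurableSet]
    exact NAMeas.msupport_compl_null _
  have hkey : ∀ γ β : GeodesicLine X, γ ∉ N → β ∉ N → ¬ Antagonist γ β := by
    rintro γ β hγN hβN ⟨x, y, hxy, t, u, v, w, htu, hvw, hγt, hγu, hβv, hβw⟩
    set L := dist x y with hLdef
    have hLpos : 0 < L := dist_pos.mpr hxy
    have hL1 : L = u - t := by
      rw [hLdef, ← hγt, ← hγu, line_dist, abs_of_nonpos (by linarith)]; ring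
    have hL2 : L = w - v := by
      rw [hLdef, ← hβv, ← hβw, dist_comm, line_dist, abs_of_nonpos (by linarith)]; ring
    obtain ⟨a, ha⟩ := exists_rat_lt (min t v)
    obtain ⟨b, hb⟩ := exists_rat_gt
      (max (max u w) (((w - t) ^ 2 + (u - v) ^ 2) / (4 * L) + a))
    have hat : (a : ℝ) < t := lt_of_lt_of_le ha (min_le_left _ _)
    have hav : (a : ℝ) < v := lt_of_lt_of_le ha (min_le_right _ _)
    have hbu : (u : ℝ) < b := lt_of_le_of_lt ((le_max_left u w).trans (le_max_left _ _)) hb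
    have hbw : (w : ℝ) < b := lt_of_le_of_lt ((le_max_right u w).trans (le_max_left _ _)) hb
    have h4L : 4 * L * ((b : ℝ) - a) > (w - t) ^ 2 + (u - v) ^ 2 := by
      have h1 : ((w - t) ^ 2 + (u - v) ^ 2) / (4 * L) + (a : ℝ) < b :=
        lt_of_le_of_lt (le_max_right _ _) hb
      have h2 : ((w - t) ^ 2 + (u - v) ^ 2) / (4 * L) < (b : ℝ) - a := by linarith
      have h3 := (div_lt_iff₀ (by linarith : (0:ℝ) < 4 * L)).mp h2
      linarith
    have hab : (a : ℝ) < (b : ℝ) := by linarith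
    have habq : a < b := by exact_mod_cast hab
    have hcyc := hcm (a:ℝ) (b:ℝ) hab
    have hγmem : ((eval (a : ℝ) γ, eval (b : ℝ) γ)) ∈
        msupport (μ.map (fun γ : GeodesicLine X => (eval (a : ℝ) γ, eval (b : ℝ) γ))) := by
      by_contra hc
      exact hγN (mem_iUnion.mpr ⟨(a, b), hc⟩)
    have hβmem : ((eval (a : ℝ) β, eval (b : ℝ) β)) ∈
        msupport (μ.map (fun γ : GeodesicLine X => (eval (a : ℝ) γ, eval (b : ℝ) γ))) := by
      by_contra hc
      exact hβN (mem_iUnion.mpr ⟨(a, b), hc⟩)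
    set P : Fin 2 → X × X := ![(eval (a : ℝ) γ, eval (b : ℝ) γ),
      (eval (a : ℝ) β, eval (b : ℝ) β)] with hP
    have hPmem : ∀ i, P i ∈
        msupport (μ.map (fun γ : GeodesicLine X => (eval (a : ℝ) γ, eval (b : ℝ) γ))) := by
      intro i
      fin_cases i
      · exact hγmem
      · exact hβmem
    have hineq := hcyc 2 P hPmem (Equiv.swap 0 1)
    rw [Fin.sum_univ_two, Fin.sum_univ_two] at hineq
    have hσ0 : Equiv.swap (0 : Fin 2) 1 0 = 1 := Equiv.swap_apply_left 0 1
    have hσ1 : Equiv.swap (0 : Fin 2) 1 1 = 0 := Equiv.swap_apply_right 0 1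
    rw [hσ0, hσ1] at hineq
    simp only [hP, Matrix.cons_val_zero, Matrix.cons_val_one, Matrix.head_cons] at hineq
    -- hineq : dist (γa) (γb)^2 + dist (βa) (βb)^2 ≤ dist (γa) (βb)^2 + dist (βa) (γb)^2
    set q : ℝ := (b : ℝ) - a with hq
    have hdγ : dist (eval (a:ℝ) γ) (eval (b:ℝ) γ) = q := by
      show dist (γ.1 (a:ℝ)) (γ.1 (b:ℝ)) = q
      rw [line_dist, abs_of_nonpos (by linarith)]; rw [hq]; ring
    have hdβ : dist (eval (a:ℝ) β) (eval (b:ℝ) β) = q := by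
      show dist (β.1 (a:ℝ)) (β.1 (b:ℝ)) = q
      rw [line_dist, abs_of_nonpos (by linarith)]; rw [hq]; ring
    have hP1 : dist (eval (a:ℝ) γ) (eval (b:ℝ) β) ≤ (t - a) + ((b:ℝ) - w) := by
      have e1 : dist (γ.1 (a:ℝ)) (γ.1 t) = t - a := by
        rw [line_dist, abs_of_nonpos (by linarith)]; ring
      have e2 : dist (γ.1 t) (β.1 (b:ℝ)) = (b:ℝ) - w := by
        rw [hγt, ← hβw, line_dist, abs_of_nonpos (by linarith)]; ring
      calc dist (eval (a:ℝ) γ) (eval (b:ℝ) β)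
          ≤ dist (γ.1 (a:ℝ)) (γ.1 t) + dist (γ.1 t) (β.1 (b:ℝ)) := dist_triangle _ _ _
        _ = (t - a) + ((b:ℝ) - w) := by rw [e1, e2]
    have hP2 : dist (eval (a:ℝ) β) (eval (b:ℝ) γ) ≤ (v - a) + ((b:ℝ) - u) := by
      have e1 : dist (β.1 (a:ℝ)) (β.1 v) = v - a := by
        rw [line_dist, abs_of_nonpos (by linarith)]; ring
      have e2 : dist (β.1 v) (γ.1 (b:ℝ)) = (b:ℝ) - u := by
        rw [hβv, ← hγu, line_dist, abs_of_nonpos (by linarith)]; ring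
      calc dist (eval (a:ℝ) β) (eval (b:ℝ) γ)
          ≤ dist (β.1 (a:ℝ)) (β.1 v) + dist (β.1 v) (γ.1 (b:ℝ)) := dist_triangle _ _ _
        _ = (v - a) + ((b:ℝ) - u) := by rw [e1, e2]
    have hsq1 : dist (eval (a:ℝ) γ) (eval (b:ℝ) β) ^ 2 ≤ ((t - a) + ((b:ℝ) - w)) ^ 2 :=
      pow_le_pow_left₀ dist_nonneg hP1 2
    have hsq2 : dist (eval (a:ℝ) β) (eval (b:ℝ) γ) ^ 2 ≤ ((v - a) + ((b:ℝ) - u)) ^ 2 :=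
      pow_le_pow_left₀ dist_nonneg hP2 2
    rw [hdγ, hdβ] at hineq
    have hsum : (w - t) + (u - v) = 2 * L := by
      rw [hL1]  -- L = u - t
      linarith [hL2]
    have hexp : ((t - a) + ((b:ℝ) - w)) ^ 2 + ((v - a) + ((b:ℝ) - u)) ^ 2
        = 2 * q ^ 2 - 2 * q * ((w - t) + (u - v)) + ((w - t) ^ 2 + (u - v) ^ 2) := by
      rw [hq]; ring
    have hstep : 2 * q ^ 2 ≤ 2 * q ^ 2 - 2 * q * (2 * L) + ((w - t) ^ 2 + (u - v) ^ 2) := by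
      calc 2 * q ^ 2 = q ^ 2 + q ^ 2 := by ring
        _ ≤ dist (eval (a:ℝ) γ) (eval (b:ℝ) β) ^ 2
            + dist (eval (a:ℝ) β) (eval (b:ℝ) γ) ^ 2 := hineq
        _ ≤ ((t - a) + ((b:ℝ) - w)) ^ 2 + ((v - a) + ((b:ℝ) - u)) ^ 2 := by linarith
        _ = 2 * q ^ 2 - 2 * q * ((w - t) + (u - v)) + ((w - t) ^ 2 + (u - v) ^ 2) := hexp
        _ = 2 * q ^ 2 - 2 * q * (2 * L) + ((w - t) ^ 2 + (u - v) ^ 2) := by rw [hsum]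
    have hqL : 2 * q * (2 * L) = 4 * L * q := by ring
    rw [hq] at hstep
    -- contradiction with h4L
    nlinarith [h4L, hstep]
  have hsub : {p : GeodesicLine X × GeodesicLine X | Antagonist p.1 p.2}
      ⊆ (N ×ˢ univ) ∪ (univ ×ˢ N) := by
    rintro ⟨γ, β⟩ h
    by_cases hγ : γ ∈ N
    · exact Or.inl ⟨hγ, mem_univ _⟩
    by_cases hβ : β ∈ N
    · exact Or.inr ⟨mem_univ _, hβ⟩
    exact absurd h (hkey γ β hγ hβ)
  have hnul : (μ.prod μ) ((N ×ˢ univ) ∪ (univ ×ˢ N)) = 0 := by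
    refine measure_union_null ?_ ?_
    · rw [Measure.prod_prod, hNnull, zero_mul]
    · rw [Measure.prod_prod, hNnull, mul_zero]
  exact measure_mono_null hsub hnul

end NAFinal2
end
open MeasureTheory in
/-- A probability measure `μ` on the geodesic lines of a complete
locally compact metric tree is `d²`-cyclically monotone (all couplings `(e_r,e_s)_#μ`,
`r < s`, have cyclically monotone support for the cost `d²`) iff `μ ⊗ μ`-almost
every pair of geodesics is non-antagonist. -/
theorem cyclically_monotone_iff_ae_no_antagonism {X : Type*} [MetricSpace X]
    [CompleteSpace X] [LocallyCompactSpace X] [MeasurableSpace X] [BorelSpace X]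
    (hgeo : IsGeodesicSpace X) (htree : IsZeroHyperbolic X)
    (μ : Measure (GeodesicLine X)) [IsProbabilityMeasure μ] :
    (∀ r s : ℝ, r < s →
        CyclicallyMonotone (fun a b : X => dist a b ^ 2)
          (msupport (μ.map (fun γ => (eval r γ, eval s γ))))) ↔
      (μ.prod μ) {p : GeodesicLine X × GeodesicLine X | Antagonist p.1 p.2} = 0 := by
  constructor
  · intro hcm
    exact NAFinal2.dir_anta hgeo htree μ hcm
  · intro hW r s hrs
    exact NAFinal.dir_mono hgeo htree μ hW r s hrs
end
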